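/- arXiv:1310.7088 — 4 statements merged into one kernel-verified Lean document; each statement's English description precedes it below -/
import Mathlib

section
/- In GL₂(𝔽₃), the normalizer of a non-split Cartan subgroup is a 2-Sylow subgroup of GL₂(𝔽₃), and the normalizer of a split Cartan subgroup is contained in the normalizer of a non-split Cartan subgroup as a subgroup of index 2. -/
open Matrix

/-- A subgroup of `GL₂(𝔽_p)` is absolutely irreducible if its natural two-dimensional
representation over the algebraic closure of `𝔽_p` is irreducible, i.e. the only invariant
subspaces are `⊥` and `⊤`. -/
def IsAbsolutelyIrreducible (p : ℕ) [Fact p.Prime] (G : Subgroup (GL (Fin 2) (ZMod p))) : Prop :=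
  ∀ W : Submodule (AlgebraicClosure (ZMod p)) (Fin 2 → AlgebraicClosure (ZMod p)),
    (∀ g ∈ G, ∀ w ∈ W,
      (((g : GL (Fin 2) (ZMod p)) : Matrix (Fin 2) (Fin 2) (ZMod p)).map
        (algebraMap (ZMod p) (AlgebraicClosure (ZMod p)))).mulVec w ∈ W) →
    W = ⊥ ∨ W = ⊤

/-- `SL₂(𝔽_p)` as a subgroup of `GL₂(𝔽_p)`: the kernel of the determinant. -/
def SL2 (p : ℕ) : Subgroup (GL (Fin 2) (ZMod p)) :=
  (Matrix.GeneralLinearGroup.det : GL (Fin 2) (ZMod p) →* (ZMod p)ˣ).ker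

/-- A split Cartan subgroup of `GL₂(𝔽_p)`: a conjugate of the diagonal torus. -/
def IsSplitCartan (p : ℕ) (C : Subgroup (GL (Fin 2) (ZMod p))) : Prop :=
  ∃ g : GL (Fin 2) (ZMod p), ∀ u : GL (Fin 2) (ZMod p), u ∈ C ↔
    ∃ a b : (ZMod p)ˣ,
      ((g * u * g⁻¹ : GL (Fin 2) (ZMod p)) : Matrix (Fin 2) (Fin 2) (ZMod p)) =
        Matrix.diagonal ![(a : ZMod p), (b : ZMod p)]

/-- A non-split Cartan subgroup of `GL₂(𝔽_p)`: the image of `𝔽_{p²}ˣ` under an embedding of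
rings `𝔽_{p²} → M₂(𝔽_p)`. -/
def IsNonsplitCartan (p : ℕ) [Fact p.Prime] (C : Subgroup (GL (Fin 2) (ZMod p))) : Prop :=
  ∃ f : GaloisField p 2 →+* Matrix (Fin 2) (Fin 2) (ZMod p),
    ∀ u : GL (Fin 2) (ZMod p), u ∈ C ↔
      ∃ x : GaloisField p 2, x ≠ 0 ∧ ((u : Matrix (Fin 2) (Fin 2) (ZMod p)) = f x)

/-- A Cartan subgroup of `GL₂(𝔽_p)` is either a split or a non-split Cartan subgroup. -/
def IsCartan (p : ℕ) [Fact p.Prime] (C : Subgroup (GL (Fin 2) (ZMod p))) : Prop :=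
  IsSplitCartan p C ∨ IsNonsplitCartan p C


/-!
Since `|GL₂(𝔽₃)| = 48 = 16 · 3`, a Sylow `2`-subgroup `P` has index `3`. A non-split Cartan `C`,
cyclic of order `8`, lies in such a `P` with index `2`, so `P ≤ N(C)`; and `N(C) ≠ GL₂(𝔽₃)`,
because an abelian normal subgroup of `GL₂(𝔽₃)` has exponent dividing `2` (a finite check)
while `C` has exponent `8`. As `P` is maximal, `N(C) = P`. The normalizer of a split Cartan is,
up to conjugacy, the group of the `8` invertible monomial matrices; being a `2`-group it lies in a
Sylow `2`-subgroup. Every Sylow `2`-subgroup is conjugate to the normalizer of one fixed non-split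
Cartan, hence is itself the normalizer of a conjugate non-split Cartan.
-/

open Subgroup

section GroupTheory

variable {G : Type*} [Group G]

theorem Subgroup.card_mul_relIndex {H K : Subgroup G} (h : H ≤ K) :
    Nat.card H * H.relIndex K = Nat.card K := by
  simpa [relIndex_bot_left] using relIndex_mul_relIndex ⊥ H K bot_le h

theorem Subgroup.normalizer_eq_of_relIndex_eq_two {H P : Subgroup G} (hHP : H ≤ P)
    (hrel : H.relIndex P = 2) (hP : P.index.Prime) (hH : ¬H.Normal) :
    normalizer (H : Set G) = P := by
  have hPN : P ≤ normalizer (H : Set G) :=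
    have : (H.subgroupOf P).Normal := normal_of_index_eq_two hrel
    le_normalizer_of_normal_subgroupOf hHP
  rcases (Nat.dvd_prime hP).mp (index_dvd_of_le hPN) with h | h
  · exact absurd (normalizer_eq_top_iff.mp (index_eq_one.mp h)) hH
  · have hrel' := relIndex_mul_index hPN
    rw [h, Nat.mul_eq_right hP.ne_zero, relIndex_eq_one] at hrel'
    exact le_antisymm hrel' hPN

theorem Units.card_subgroup_eq_card_subtype {M : Type*} [Monoid M] (H : Subgroup Mˣ)
    (P : M → Prop) (hH : ∀ u : Mˣ, u ∈ H ↔ P u) :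
    Nat.card H = Nat.card {m : M // IsUnit m ∧ P m} :=
  Nat.card_congr
    { toFun := fun u => ⟨u.1, u.1.isUnit, (hH u).mp u.2⟩
      invFun := fun m => ⟨m.2.1.unit, (hH _).mpr m.2.2⟩
      left_inv := fun _ => Subtype.ext (Units.ext rfl)
      right_inv := fun _ => rfl }

end GroupTheory

theorem Matrix.GeneralLinearGroup.coe_mul_mul_inv {n K : Type*} [Fintype n] [DecidableEq n]
    [Field K] (g : GL n K) (m : Matrix n n K) :
    (g : Matrix n n K) * m * ((g⁻¹ : GL n K) : Matrix n n K) =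
      (g : Matrix n n K).det⁻¹ • ((g : Matrix n n K) * m * adjugate g) := by
  rw [coe_units_inv, inv_def, Ring.inverse_eq_inv', mul_smul_comm]

theorem Matrix.GeneralLinearGroup.coe_conj_apply_eq_zero_iff {n K : Type*} [Fintype n]
    [DecidableEq n] [Field K] (g u : GL n K) (i j : n) :
    ((g * u * g⁻¹ : GL n K) : Matrix n n K) i j = 0 ↔
      ((g : Matrix n n K) * (u : Matrix n n K) * adjugate (g : Matrix n n K)) i j = 0 := by
  rw [Units.val_mul, Units.val_mul, coe_mul_mul_inv, smul_apply, smul_eq_mul, mul_eq_zero,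
    inv_eq_zero, or_iff_right g.det_ne_zero]

theorem Matrix.GeneralLinearGroup.exists_coe_eq_diagonal_iff {R : Type*} [CommRing R]
    (u : GL (Fin 2) R) :
    (∃ a b : Rˣ, (u : Matrix (Fin 2) (Fin 2) R) = diagonal ![(a : R), (b : R)]) ↔
      (u : Matrix (Fin 2) (Fin 2) R) 0 1 = 0 ∧ (u : Matrix (Fin 2) (Fin 2) R) 1 0 = 0 := by
  constructor
  · rintro ⟨a, b, h⟩
    simp [h]
  · rintro ⟨h01, h10⟩
    have hdet :
        IsUnit ((u : Matrix (Fin 2) (Fin 2) R) 0 0 * (u : Matrix (Fin 2) (Fin 2) R) 1 1) := by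
      simpa [det_fin_two, h01, h10] using (Matrix.isUnit_iff_isUnit_det _).mp u.isUnit
    refine ⟨(isUnit_of_mul_isUnit_left hdet).unit, (isUnit_of_mul_isUnit_right hdet).unit, ?_⟩
    ext i j
    fin_cases i <;> fin_cases j <;> simp [h01, h10]

section Nonsplit

variable {p : ℕ} [Fact p.Prime]

theorem mem_range_unitsMap_iff (f : GaloisField p 2 →+* Matrix (Fin 2) (Fin 2) (ZMod p))
    (u : GL (Fin 2) (ZMod p)) :
    u ∈ (Units.map f.toMonoidHom).range ↔
      ∃ x : GaloisField p 2, x ≠ 0 ∧ (u : Matrix (Fin 2) (Fin 2) (ZMod p)) = f x := by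
  constructor
  · rintro ⟨x, rfl⟩
    exact ⟨x, x.ne_zero, rfl⟩
  · rintro ⟨x, hx, hu⟩
    exact ⟨Units.mk0 x hx, Units.ext hu.symm⟩

theorem isNonsplitCartan_iff_exists_eq_range {C : Subgroup (GL (Fin 2) (ZMod p))} :
    IsNonsplitCartan p C ↔
      ∃ f : GaloisField p 2 →+* Matrix (Fin 2) (Fin 2) (ZMod p),
        C = (Units.map f.toMonoidHom).range := by
  simp only [IsNonsplitCartan, Subgroup.ext_iff, mem_range_unitsMap_iff]

theorem exists_isNonsplitCartan : ∃ C : Subgroup (GL (Fin 2) (ZMod p)), IsNonsplitCartan p C :=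
  let b := Module.finBasisOfFinrankEq (ZMod p) (GaloisField p 2)
    (GaloisField.finrank p two_ne_zero)
  ⟨_, isNonsplitCartan_iff_exists_eq_range.mpr ⟨(Algebra.leftMulMatrix b).toRingHom, rfl⟩⟩

theorem IsNonsplitCartan.map_conj {C : Subgroup (GL (Fin 2) (ZMod p))}
    (hC : IsNonsplitCartan p C) (g : GL (Fin 2) (ZMod p)) :
    IsNonsplitCartan p (C.map (MulAut.conj g).toMonoidHom) := by
  obtain ⟨f, rfl⟩ := isNonsplitCartan_iff_exists_eq_range.mp hC
  refine isNonsplitCartan_iff_exists_eq_range.mpr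
    ⟨(MulSemiringAction.toRingHom _ _ (ConjAct.toConjAct g)).comp f, ?_⟩
  rw [MonoidHom.map_range]
  congr 1
  ext x
  simp [ConjAct.units_smul_def]

theorem card_units_galoisField_two : Nat.card (GaloisField p 2)ˣ = p ^ 2 - 1 := by
  rw [Nat.card_units, GaloisField.card p 2 two_ne_zero]

theorem IsNonsplitCartan.card {C : Subgroup (GL (Fin 2) (ZMod p))} (hC : IsNonsplitCartan p C) :
    Nat.card C = p ^ 2 - 1 := by
  obtain ⟨f, rfl⟩ := isNonsplitCartan_iff_exists_eq_range.mp hC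
  rw [← Nat.card_congr (MonoidHom.ofInjective (Units.map_injective f.injective)).toEquiv,
    card_units_galoisField_two]

theorem IsNonsplitCartan.commute {C : Subgroup (GL (Fin 2) (ZMod p))}
    (hC : IsNonsplitCartan p C) : ∀ a ∈ C, ∀ b ∈ C, Commute a b := by
  obtain ⟨f, rfl⟩ := isNonsplitCartan_iff_exists_eq_range.mp hC
  rintro _ ⟨x, rfl⟩ _ ⟨y, rfl⟩
  exact (Commute.all x y).map _

theorem IsNonsplitCartan.exists_sq_ne_one {C : Subgroup (GL (Fin 2) (ZMod p))}
    (hC : IsNonsplitCartan p C) : ∃ u ∈ C, u ^ 2 ≠ 1 := by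
  obtain ⟨f, rfl⟩ := isNonsplitCartan_iff_exists_eq_range.mp hC
  by_contra! h
  have hexp : Monoid.exponent (GaloisField p 2)ˣ ∣ 2 :=
    Monoid.exponent_dvd_of_forall_pow_eq_one fun x =>
      Units.map_injective f.injective (by simpa using h _ ⟨x, rfl⟩)
  rw [IsCyclic.exponent_eq_card, card_units_galoisField_two] at hexp
  have := Nat.le_of_dvd two_pos hexp
  have := Nat.pow_le_pow_left (Fact.out : p.Prime).two_le 2
  omega

end Nonsplit

theorem isSplitCartan_iff {p : ℕ} {C : Subgroup (GL (Fin 2) (ZMod p))} :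
    IsSplitCartan p C ↔ ∃ g : GL (Fin 2) (ZMod p), ∀ u, u ∈ C ↔
      ((g * u * g⁻¹ : GL (Fin 2) (ZMod p)) : Matrix (Fin 2) (Fin 2) (ZMod p)) 0 1 = 0 ∧
        ((g * u * g⁻¹ : GL (Fin 2) (ZMod p)) : Matrix (Fin 2) (Fin 2) (ZMod p)) 1 0 = 0 := by
  simp only [IsSplitCartan, GeneralLinearGroup.exists_coe_eq_diagonal_iff]

abbrev Matrix.IsMonomial₂ {R : Type*} [Zero R] (m : Matrix (Fin 2) (Fin 2) R) : Prop :=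
  (m 0 1 = 0 ∧ m 1 0 = 0) ∨ (m 0 0 = 0 ∧ m 1 1 = 0)

section GL2ZMod3

local notation "𝔾" => GL (Fin 2) (ZMod 3)
local notation "𝕄" => Matrix (Fin 2) (Fin 2) (ZMod 3)

theorem card_GL_two_zmod_three : Nat.card 𝔾 = 48 := by
  rw [card_GL_field]
  simp [ZMod.card, Fin.prod_univ_two]

theorem card_sylow_two_GL_two_zmod_three (P : Sylow 2 𝔾) : Nat.card P = 16 := by
  rw [P.card_eq_multiplicity, card_GL_two_zmod_three,
    show (48 : ℕ) = 2 ^ 4 * 3 by rfl, Nat.factorization_mul_apply_of_coprime (by norm_num),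
    Nat.Prime.factorization_pow Nat.prime_two]
  simp [Nat.factorization_eq_zero_of_not_dvd]

/- The finite checks use `adjugate g = det g • g⁻¹` in place of `g⁻¹`, which `decide` cannot
evaluate. -/
set_option maxRecDepth 10000 in
theorem mul_self_eq_one_of_commute_conj_adjugate :
    ∀ J : 𝕄, J.det ≠ 0 →
      (∀ g : 𝕄, g.det ≠ 0 → J * (g * J * adjugate g) = g * J * adjugate g * J) → J * J = 1 := by
  decide

theorem sq_eq_one_of_mem_of_normal {H : Subgroup 𝔾} [H.Normal]
    (hH : ∀ a ∈ H, ∀ b ∈ H, Commute a b) {u : 𝔾} (hu : u ∈ H) : u ^ 2 = 1 := by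
  refine Units.ext ?_
  rw [Units.val_pow_eq_pow_val, sq, Units.val_one]
  refine mul_self_eq_one_of_commute_conj_adjugate _ u.det_ne_zero fun g hg => ?_
  have hv := ‹H.Normal›.conj_mem u hu (GeneralLinearGroup.mkOfDetNeZero g hg)
  have := congrArg Units.val (hH u hu _ hv).eq
  simp only [Units.val_mul, GeneralLinearGroup.coe_mul_mul_inv] at this
  rw [Matrix.mul_smul, Matrix.smul_mul] at this
  exact smul_right_injective _ (inv_ne_zero hg) this

theorem IsNonsplitCartan.not_normal {C : Subgroup 𝔾} (hC : IsNonsplitCartan 3 C) : ¬C.Normal := by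
  intro hN
  obtain ⟨u, hu, hu2⟩ := hC.exists_sq_ne_one
  exact hu2 (sq_eq_one_of_mem_of_normal hC.commute hu)

theorem IsNonsplitCartan.exists_sylow_eq_normalizer {C : Subgroup 𝔾}
    (hC : IsNonsplitCartan 3 C) : ∃ S : Sylow 2 𝔾, (S : Subgroup 𝔾) = normalizer (C : Set 𝔾) := by
  have hC8 : Nat.card C = 8 := hC.card
  obtain ⟨P, hCP⟩ := (IsPGroup.of_card (p := 2) (n := 3) hC8).exists_le_sylow
  refine ⟨P, (normalizer_eq_of_relIndex_eq_two hCP ?_ ?_ hC.not_normal).symm⟩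
  · have := card_mul_relIndex hCP
    rw [hC8, card_sylow_two_GL_two_zmod_three] at this
    omega
  · have := card_mul_index (P : Subgroup 𝔾)
    rw [card_sylow_two_GL_two_zmod_three, card_GL_two_zmod_three] at this
    rw [show (P : Subgroup 𝔾).index = 3 by omega]
    exact Nat.prime_three

theorem exists_isNonsplitCartan_normalizer_eq (P : Sylow 2 𝔾) :
    ∃ C : Subgroup 𝔾, IsNonsplitCartan 3 C ∧ normalizer (C : Set 𝔾) = P := by
  obtain ⟨C, hC⟩ := exists_isNonsplitCartan (p := 3)
  obtain ⟨S, hS⟩ := hC.exists_sylow_eq_normalizer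
  obtain ⟨g, rfl⟩ := MulAction.exists_smul_eq 𝔾 S P
  refine ⟨C.map (MulAut.conj g).toMonoidHom, hC.map_conj g, ?_⟩
  rw [← map_equiv_normalizer_eq, ← hS]
  rfl

theorem isMonomial₂_of_conj_adjugate_isDiag :
    ∀ g : 𝕄, g.det ≠ 0 → (g * !![1, 0; 0, -1] * adjugate g : 𝕄) 0 1 = 0 →
      (g * !![1, 0; 0, -1] * adjugate g : 𝕄) 1 0 = 0 → g.IsMonomial₂ := by
  decide

set_option maxRecDepth 10000 in
theorem conj_adjugate_isDiag_of_isMonomial₂ :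
    ∀ g m : 𝕄, g.IsMonomial₂ → m 0 1 = 0 → m 1 0 = 0 →
      (g * m * adjugate g) 0 1 = 0 ∧ (g * m * adjugate g) 1 0 = 0 := by
  decide

theorem card_det_ne_zero_isMonomial₂ : Nat.card {m : 𝕄 // m.det ≠ 0 ∧ m.IsMonomial₂} = 8 := by
  rw [Nat.card_eq_fintype_card]
  decide

theorem mem_normalizer_iff_isMonomial₂ {D : Subgroup 𝔾}
    (hD : ∀ u : 𝔾, u ∈ D ↔ (u : 𝕄) 0 1 = 0 ∧ (u : 𝕄) 1 0 = 0) (h : 𝔾) :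
    h ∈ normalizer (D : Set 𝔾) ↔ (h : 𝕄).IsMonomial₂ := by
  constructor
  · intro hh
    let t : 𝔾 := ⟨!![1, 0; 0, -1], !![1, 0; 0, -1], by decide, by decide⟩
    have ht : h * t * h⁻¹ ∈ D := (mem_normalizer_iff.mp hh t).mp ((hD t).mpr (by decide))
    simp only [hD, GeneralLinearGroup.coe_conj_apply_eq_zero_iff] at ht
    exact isMonomial₂_of_conj_adjugate_isDiag _ h.det_ne_zero ht.1 ht.2
  · intro hh
    refine mem_normalizer_fintype fun n hn => ?_
    rw [SetLike.mem_coe, hD] at hn ⊢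
    simp only [GeneralLinearGroup.coe_conj_apply_eq_zero_iff]
    exact conj_adjugate_isDiag_of_isMonomial₂ _ _ hh hn.1 hn.2

theorem IsSplitCartan.card_normalizer {C : Subgroup 𝔾} (hC : IsSplitCartan 3 C) :
    Nat.card (normalizer (C : Set 𝔾)) = 8 := by
  obtain ⟨g, hg⟩ := isSplitCartan_iff.mp hC
  have hD : ∀ u : 𝔾,
      u ∈ C.map (MulAut.conj g).toMonoidHom ↔ (u : 𝕄) 0 1 = 0 ∧ (u : 𝕄) 1 0 = 0 := by
    intro u
    rw [mem_map_equiv, hg]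
    simp [mul_assoc]
  rw [← card_map_of_injective (f := (MulAut.conj g).toMonoidHom) (MulAut.conj g).injective,
    map_equiv_normalizer_eq,
    Units.card_subgroup_eq_card_subtype _ _ (mem_normalizer_iff_isMonomial₂ hD)]
  simp_rw [isUnit_iff_isUnit_det, isUnit_iff_ne_zero]
  exact card_det_ne_zero_isMonomial₂

end GL2ZMod3

/-- In `GL₂(𝔽₃)`, the normalizer of a non-split Cartan subgroup is a 2-Sylow subgroup of
`GL₂(𝔽₃)`, and the normalizer of a split Cartan subgroup is contained in the normalizer of some
non-split Cartan subgroup as a subgroup of index 2. -/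
theorem GL2_ZMod3_cartan_normalizers :
    (∀ C : Subgroup (GL (Fin 2) (ZMod 3)), IsNonsplitCartan 3 C →
      ∃ S : Sylow 2 (GL (Fin 2) (ZMod 3)), (S : Subgroup (GL (Fin 2) (ZMod 3))) = Subgroup.normalizer ((C : Subgroup (GL (Fin 2) (ZMod 3))) : Set (GL (Fin 2) (ZMod 3)))) ∧
    (∀ C : Subgroup (GL (Fin 2) (ZMod 3)), IsSplitCartan 3 C →
      ∃ C' : Subgroup (GL (Fin 2) (ZMod 3)), IsNonsplitCartan 3 C' ∧
        Subgroup.normalizer ((C : Subgroup (GL (Fin 2) (ZMod 3))) : Set (GL (Fin 2) (ZMod 3))) ≤ Subgroup.normalizer ((C' : Subgroup (GL (Fin 2) (ZMod 3))) : Set (GL (Fin 2) (ZMod 3))) ∧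
          (Subgroup.normalizer ((C : Subgroup (GL (Fin 2) (ZMod 3))) : Set (GL (Fin 2) (ZMod 3)))).relIndex (Subgroup.normalizer ((C' : Subgroup (GL (Fin 2) (ZMod 3))) : Set (GL (Fin 2) (ZMod 3)))) = 2) := by
  refine ⟨fun C hC => hC.exists_sylow_eq_normalizer, fun C hC => ?_⟩
  have hN := hC.card_normalizer
  obtain ⟨P, hNP⟩ := (IsPGroup.of_card (p := 2) (n := 3) hN).exists_le_sylow
  obtain ⟨C', hC', hC'P⟩ := exists_isNonsplitCartan_normalizer_eq P
  refine ⟨C', hC', hC'P ▸ hNP, ?_⟩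
  have := card_mul_relIndex hNP
  rw [hN, card_sylow_two_GL_two_zmod_three, ← hC'P] at this
  omega
end

section
/- The elliptic curve E over ℚ given by the Weierstrass equation y² + xy + y = x³ + x² − 5x + 2 (Cremona label 15A3) has Mordell–Weil group E(ℚ) isomorphic to ℤ/4ℤ × ℤ/2ℤ, with exactly the eight rational points ∞, (3/4, −7/8), (0,−2), (2,−4), (1,−1), (−3,1), (0,1), (2,1). -/
/-!
With `v = 2y + x + 1` the curve reads `v² = (x - 1)(4x - 3)(x + 3)`, so the points with `v = 0`
are the three points of order 2. For any other rational point, `t = 2x(x - 2)/v` makes both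
`t² + 1` and `t² + 16` rational squares. Writing `t = p/q` in lowest terms, `p² + q²` and
`p² + 16q²` are then squares of integers, an instance of Euler's concordant forms problem, and a
Fermat-style infinite descent, driven by the parametrization of primitive Pythagorean triples,
shows that `p = 0`, i.e. `x ∈ {0, 2}`. That leaves eight rational points. Among them `(0, 1)` has
order 4 and `(3/4, -7/8)` is a point of order 2 other than `2 • (0, 1) = (1, -1)`, so `ℤ/4 × ℤ/2`
embeds into `E(ℚ)`, and the two groups have the same order.
-/

/-- The elliptic curve `y² + xy + y = x³ + x² − 5x + 2` over `ℚ` (Cremona label 15A3). -/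
def E15A3 : WeierstrassCurve ℚ :=
  { a₁ := 1, a₂ := 1, a₃ := 1, a₄ := -5, a₆ := 2 }

theorem exists_eq_mul_of_mul_eq_mul {α : Type*} [CommMonoidWithZero α] [IsCancelMulZero α]
    [DecompositionMonoid α] {a b c d : α} (h : a * b = c * d) (ha : a ≠ 0) :
    ∃ w x y z, a = w * x ∧ b = y * z ∧ c = w * y ∧ d = x * z := by
  obtain ⟨w, x, ⟨y, rfl⟩, ⟨z, rfl⟩, rfl⟩ := exists_dvd_and_dvd_of_dvd_mul (Dvd.intro b h)
  exact ⟨w, x, y, z, rfl, mul_left_cancel₀ ha (h.trans (mul_mul_mul_comm w y x z)), rfl, rfl⟩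

theorem Int.isCoprime_four_left {m : ℤ} : IsCoprime 4 m ↔ Odd m :=
  ⟨fun h ↦ Int.isCoprime_two_left.mp (h.of_isCoprime_of_dvd_left (by norm_num)),
    fun h ↦ by simpa using (Int.isCoprime_two_left.mpr h).pow_left (m := 2)⟩

theorem Int.four_dvd_of_sq_add_sq_eq_sq {p q a : ℤ} (hp : Even p) (hq : Odd q)
    (h : p ^ 2 + q ^ 2 = a ^ 2) : 4 ∣ p := by
  have ha : Odd a := by
    rw [← Int.odd_pow' two_ne_zero, ← h]
    exact (hp.pow_of_ne_zero two_ne_zero).add_odd hq.pow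
  have h8 : 8 ∣ p ^ 2 := by
    have := (Int.eight_dvd_sq_sub_one_of_odd ha).sub (Int.eight_dvd_sq_sub_one_of_odd hq)
    rwa [show a ^ 2 - 1 - (q ^ 2 - 1) = p ^ 2 by linarith] at this
  obtain ⟨k, rfl⟩ := hp
  have : 2 ∣ k ^ 2 := by rw [show (k + k) ^ 2 = 4 * k ^ 2 by ring] at h8; omega
  have := Int.prime_two.dvd_of_dvd_pow this
  omega

section ZModFourProdZModTwo

variable {A : Type*} [AddCommGroup A] {g h : A}

theorem eq_two_nsmul_of_mem_zmultiples (hg : addOrderOf g = 4) (hh : addOrderOf h = 2)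
    (hgh : h ∈ AddSubgroup.zmultiples g) : h = 2 • g := by
  obtain ⟨m, rfl⟩ := AddSubgroup.mem_zmultiples_iff.mp hgh
  have h2m : (4 : ℤ) ∣ 2 * m := by
    rw [← Nat.cast_ofNat, ← hg, addOrderOf_dvd_iff_zsmul_eq_zero, mul_zsmul, two_zsmul,
      ← two_nsmul, ← hh, addOrderOf_nsmul_eq_zero]
  have hm : ¬(4 : ℤ) ∣ m := by
    rw [← Nat.cast_ofNat, ← hg, addOrderOf_dvd_iff_zsmul_eq_zero]
    intro hm0
    simp [hm0] at hh
  have hm2 : (m - 2) • g = 0 := by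
    rw [← addOrderOf_dvd_iff_zsmul_eq_zero, hg]
    omega
  rwa [sub_zsmul, add_neg_eq_zero, two_zsmul, ← two_nsmul] at hm2

theorem nonempty_addEquiv_zmod_four_prod_zmod_two (hA : Nat.card A = 8) (hg : addOrderOf g = 4)
    (hh : addOrderOf h = 2) (hgh : h ≠ 2 • g) : Nonempty (A ≃+ ZMod 4 × ZMod 2) := by
  have : Finite A := Nat.finite_of_card_ne_zero (by omega)
  let f : ZMod 4 × ZMod 2 →+ A :=
    (ZMod.lift 4 ⟨zmultiplesHom A g, by simp [← hg]⟩).coprod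
      (ZMod.lift 2 ⟨zmultiplesHom A h, by simp [← hh]⟩)
  have hf : Function.Injective f := by
    rw [injective_iff_map_eq_zero]
    rintro ⟨i, j⟩ hij
    obtain ⟨m, rfl⟩ := ZMod.intCast_surjective i
    obtain ⟨n, rfl⟩ := ZMod.intCast_surjective j
    simp only [f, AddMonoidHom.coprod_apply, ZMod.lift_coe, zmultiplesHom_apply] at hij
    have h2h : ∀ k : ℤ, (2 * k) • h = 0 := fun k ↦ by
      rw [← addOrderOf_dvd_iff_zsmul_eq_zero, hh]; exact dvd_mul_right _ _
    rcases Int.even_or_odd' n with ⟨k, rfl | rfl⟩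
    · rw [h2h, add_zero, ← addOrderOf_dvd_iff_zsmul_eq_zero, hg] at hij
      exact Prod.ext ((ZMod.intCast_zmod_eq_zero_iff_dvd m 4).mpr hij)
        ((ZMod.intCast_zmod_eq_zero_iff_dvd _ 2).mpr (dvd_mul_right 2 k))
    · rw [add_zsmul, h2h, zero_add, one_zsmul] at hij
      refine absurd (eq_two_nsmul_of_mem_zmultiples hg hh ?_) hgh
      rw [eq_neg_of_add_eq_zero_right hij]
      exact neg_mem (AddSubgroup.zsmul_mem_zmultiples g m)
  exact ⟨(AddEquiv.ofBijective f (hf.bijective_of_nat_card_le (by simp [hA]))).symm⟩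

end ZModFourProdZModTwo

/-- The common cofactor `s` in `w² + z² = s x²`, `w² + 16 z² = s y²` divides `15` and is `1` mod
`8`, hence `s = 1`. -/
theorem eq_sq_and_eq_sq_of_mul_eq_mul {w x y z : ℤ} (hw : Odd w) (hy : Odd y)
    (hwz : IsCoprime w z) (hxy : IsCoprime x y) (hx : x ≠ 0)
    (h : y ^ 2 * (w ^ 2 + z ^ 2) = x ^ 2 * (w ^ 2 + 16 * z ^ 2)) :
    w ^ 2 + z ^ 2 = x ^ 2 ∧ w ^ 2 + 16 * z ^ 2 = y ^ 2 := by
  obtain ⟨s, hs⟩ : x ^ 2 ∣ w ^ 2 + z ^ 2 :=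
    (hxy.pow (m := 2) (n := 2)).dvd_of_dvd_mul_right ⟨w ^ 2 + 16 * z ^ 2, by linear_combination h⟩
  have hs' : w ^ 2 + 16 * z ^ 2 = y ^ 2 * s :=
    mul_left_cancel₀ (pow_ne_zero 2 hx) (by linear_combination -h + y ^ 2 * hs)
  have hs15 : s ∣ 15 := by
    obtain ⟨u, v, huv⟩ := hwz.pow (m := 2) (n := 2)
    exact ⟨u * (16 * x ^ 2 - y ^ 2) + v * (y ^ 2 - x ^ 2),
      by linear_combination -15 * huv + (16 * u - v) * hs - (u - v) * hs'⟩
  have hs_pos : 0 < s := by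
    have hw0 : w ≠ 0 := by rintro rfl; simp at hw
    have : 0 < x ^ 2 * s := by rw [← hs]; positivity
    exact pos_of_mul_pos_right this (sq_nonneg x)
  have hs8 : 8 ∣ s - 1 := by
    obtain ⟨k, hk⟩ := Int.eight_dvd_sq_sub_one_of_odd hw
    obtain ⟨l, hl⟩ := Int.eight_dvd_sq_sub_one_of_odd hy
    exact ⟨k + 2 * z ^ 2 - s * l, by linear_combination hk - s * hl - hs'⟩
  obtain rfl : s = 1 := by
    have := Int.le_of_dvd (by norm_num) hs15
    interval_cases s <;> omega
  constructor <;> linarith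

theorem exists_odd_of_sq_add_sixteen_mul_sq {p q b : ℤ} (hpq : IsCoprime p q) (hp : Odd p)
    (hq : Even q) (hb : p ^ 2 + 16 * q ^ 2 = b ^ 2) :
    ∃ O K, Odd O ∧ IsCoprime O K ∧ p ^ 2 = (O ^ 2 - 16 * K ^ 2) ^ 2 ∧ q = 2 * O * K := by
  have htriple : PythagoreanTriple p (4 * q) |b| := by
    rw [PythagoreanTriple, ← sq, ← sq, ← sq, sq_abs, ← hb]; ring
  have hb0 : 0 < |b| := by
    refine abs_pos.mpr fun hb0 ↦ ?_
    have : p ^ 2 = 0 := by nlinarith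
    simp [(pow_eq_zero_iff two_ne_zero).mp this] at hp
  obtain ⟨m, n, hpmn, hqmn, -, hmn, hpar, -⟩ := htriple.coprime_classification'
    (Int.isCoprime_iff_gcd_eq_one.mp ((Int.isCoprime_four_left.mpr hp).symm.mul_right hpq))
    (Int.odd_iff.mp hp) hb0
  have hmn' : IsCoprime m n := Int.isCoprime_iff_gcd_eq_one.mpr hmn
  obtain ⟨r, rfl⟩ := hq
  have h4 : 4 ∣ m * n := ⟨r, by linarith⟩
  rcases hpar with ⟨-, hn⟩ | ⟨hm, -⟩
  · obtain ⟨K, rfl⟩ :=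
      (Int.isCoprime_four_left.mpr (Int.odd_iff.mpr hn)).dvd_of_dvd_mul_right h4
    exact ⟨n, K, Int.odd_iff.mpr hn, hmn'.symm.of_mul_right_right, by rw [hpmn]; ring, by linarith⟩
  · obtain ⟨K, rfl⟩ :=
      (Int.isCoprime_four_left.mpr (Int.odd_iff.mpr hm)).dvd_of_dvd_mul_left h4
    exact ⟨m, K, Int.odd_iff.mpr hm, hmn'.of_mul_right_right, by rw [hpmn]; ring, by linarith⟩

structure IsPrimitiveConcordantPair (p q : ℤ) : Prop where
  isCoprime : IsCoprime p q
  left_ne_zero : p ≠ 0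
  right_ne_zero : q ≠ 0
  isSquare_sq_add_sq : IsSquare (p ^ 2 + q ^ 2)
  isSquare_sq_add_sixteen_mul_sq : IsSquare (p ^ 2 + 16 * q ^ 2)

theorem exists_isPrimitiveConcordantPair_of_mul_eq_mul {c d O K : ℤ} (hcd : IsCoprime c d)
    (hO : Odd O) (hK : K ≠ 0) (hmul : c * d = O * K) (hsq : c ^ 2 - d ^ 2 = O ^ 2 - 16 * K ^ 2) :
    ∃ w z, IsPrimitiveConcordantPair w z ∧ w ^ 2 + z ^ 2 ≤ c ^ 2 := by
  have hc : c ≠ 0 := by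
    rintro rfl
    simp [hK] at hmul
    simp [hmul] at hO
  obtain ⟨w, x, y, z, rfl, rfl, rfl, rfl⟩ := exists_eq_mul_of_mul_eq_mul hmul hc
  obtain ⟨hw, hy⟩ := Int.odd_mul.mp hO
  have hwz : IsCoprime w z := hcd.of_mul_left_left.of_mul_right_right
  have hxy : IsCoprime x y := hcd.of_mul_left_right.of_mul_right_left
  obtain ⟨hx2, hy2⟩ := eq_sq_and_eq_sq_of_mul_eq_mul hw hy hwz hxy (left_ne_zero_of_mul hK)
    (by linear_combination -hsq)
  refine ⟨w, z, ⟨hwz, left_ne_zero_of_mul hc, right_ne_zero_of_mul hK, ⟨x, by rw [hx2, sq]⟩,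
    ⟨y, by rw [hy2, sq]⟩⟩, ?_⟩
  have : 0 < w ^ 2 := by have : w ≠ 0 := left_ne_zero_of_mul hc; positivity
  nlinarith

theorem exists_isPrimitiveConcordantPair_of_sq_add_sq {O K a : ℤ} (hO : Odd O)
    (hOK : IsCoprime O K) (hK : K ≠ 0) (ha : (O ^ 2 - 16 * K ^ 2) ^ 2 + (2 * O * K) ^ 2 = a ^ 2) :
    ∃ w z, IsPrimitiveConcordantPair w z ∧ w ^ 2 + z ^ 2 < a ^ 2 := by
  have hodd : Odd (O ^ 2 - 16 * K ^ 2) := hO.pow.sub_even ⟨8 * K ^ 2, by ring⟩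
  have hcop : IsCoprime (O ^ 2 - 16 * K ^ 2) (2 * O * K) := by
    refine IsCoprime.mul_right (IsCoprime.mul_right (Int.isCoprime_two_right.mpr hodd) ?_) ?_
    · have h16 := (Int.isCoprime_four_left.mpr hO).pow_left (m := 2) |>.mul_left
        (hOK.symm.pow_left (m := 2))
      rw [show O ^ 2 - 16 * K ^ 2 = -(4 ^ 2 * K ^ 2) + O * O by ring]
      exact h16.neg_left.add_mul_left_left O
    · rw [show O ^ 2 - 16 * K ^ 2 = O ^ 2 + K * (-16 * K) by ring]
      exact (hOK.pow_left (m := 2)).add_mul_left_left (-16 * K)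
  have htriple : PythagoreanTriple (O ^ 2 - 16 * K ^ 2) (2 * O * K) |a| := by
    rw [PythagoreanTriple, ← sq, ← sq, ← sq, sq_abs, ha]
  have ha0 : 0 < |a| := by
    refine abs_pos.mpr fun ha0 ↦ ?_
    have : (O ^ 2 - 16 * K ^ 2) ^ 2 = 0 := by nlinarith
    simp [(pow_eq_zero_iff two_ne_zero).mp this] at hodd
  obtain ⟨c, d, hX, hY, hZ, hcd, -, -⟩ := htriple.coprime_classification'
    (Int.isCoprime_iff_gcd_eq_one.mp hcop) (Int.odd_iff.mp hodd) ha0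
  obtain ⟨w, z, hwz, hle⟩ := exists_isPrimitiveConcordantPair_of_mul_eq_mul
    (Int.isCoprime_iff_gcd_eq_one.mpr hcd) hO hK (by linarith) hX.symm
  refine ⟨w, z, hwz, hle.trans_lt ?_⟩
  have hd : d ≠ 0 := by
    rintro rfl
    have hO0 : O ≠ 0 := by rintro rfl; simp at hO
    simp [hO0, hK] at hY
  have hcd2 : c ^ 2 < c ^ 2 + d ^ 2 := lt_add_of_pos_right _ (by positivity)
  rw [← sq_abs a, hZ]
  exact hcd2.trans_le (le_self_pow₀ (by linarith [sq_nonneg c]) two_ne_zero)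

namespace IsPrimitiveConcordantPair

variable {p q : ℤ}

theorem exists_lt_of_even (h : IsPrimitiveConcordantPair p q) (hp : Even p) (hq : Odd q) :
    ∃ p' q', IsPrimitiveConcordantPair p' q' ∧ p' ^ 2 + q' ^ 2 < p ^ 2 + q ^ 2 := by
  obtain ⟨a, ha⟩ := h.isSquare_sq_add_sq
  obtain ⟨b, hb⟩ := h.isSquare_sq_add_sixteen_mul_sq
  obtain ⟨n, rfl⟩ := Int.four_dvd_of_sq_add_sq_eq_sq hp hq (by rw [ha, sq])
  obtain ⟨m, rfl⟩ : 4 ∣ b := (UniqueFactorizationMonoid.pow_dvd_pow_iff_dvd two_ne_zero).mp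
    ⟨n ^ 2 + q ^ 2, by linear_combination -hb⟩
  have hn : n ≠ 0 := right_ne_zero_of_mul h.left_ne_zero
  refine ⟨q, n, ⟨h.isCoprime.symm.of_mul_right_right, h.right_ne_zero, hn,
    ⟨m, by linarith⟩, ⟨a, by linear_combination ha⟩⟩, ?_⟩
  have : 0 < n ^ 2 := by positivity
  linarith

theorem exists_lt_of_odd (h : IsPrimitiveConcordantPair p q) (hp : Odd p) (hq : Even q) :
    ∃ p' q', IsPrimitiveConcordantPair p' q' ∧ p' ^ 2 + q' ^ 2 < p ^ 2 + q ^ 2 := by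
  obtain ⟨b, hb⟩ := h.isSquare_sq_add_sixteen_mul_sq
  obtain ⟨O, K, hO, hOK, hp', rfl⟩ := exists_odd_of_sq_add_sixteen_mul_sq h.isCoprime hp hq
    (by rw [hb, sq])
  obtain ⟨a, ha⟩ := h.isSquare_sq_add_sq
  rw [ha, ← sq]
  exact exists_isPrimitiveConcordantPair_of_sq_add_sq hO hOK
    (right_ne_zero_of_mul h.right_ne_zero) (by rw [← hp']; linear_combination ha)

theorem exists_lt (h : IsPrimitiveConcordantPair p q) :
    ∃ p' q', IsPrimitiveConcordantPair p' q' ∧ p' ^ 2 + q' ^ 2 < p ^ 2 + q ^ 2 := by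
  obtain ⟨a, ha⟩ := h.isSquare_sq_add_sq
  have htriple : PythagoreanTriple p q a := by rw [PythagoreanTriple, ← ha, sq, sq]
  rcases htriple.even_odd_of_coprime (Int.isCoprime_iff_gcd_eq_one.mp h.isCoprime) with
    ⟨hp, hq⟩ | ⟨hp, hq⟩
  · exact h.exists_lt_of_even (Int.even_iff.mpr hp) (Int.odd_iff.mpr hq)
  · exact h.exists_lt_of_odd (Int.odd_iff.mpr hp) (Int.even_iff.mpr hq)

end IsPrimitiveConcordantPair

theorem not_isPrimitiveConcordantPair (p q : ℤ) : ¬IsPrimitiveConcordantPair p q := by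
  intro h
  induction hn : (p ^ 2 + q ^ 2).toNat using Nat.strong_induction_on generalizing p q with
  | _ n ih =>
    obtain ⟨p', q', h', hlt⟩ := h.exists_lt
    exact ih _ (by have := sq_nonneg p'; have := sq_nonneg q'; omega) p' q' h' rfl

theorem Rat.eq_zero_of_isSquare_sq_add_one_of_isSquare_sq_add_sixteen {t : ℚ}
    (h₁ : IsSquare (t ^ 2 + 1)) (h₁₆ : IsSquare (t ^ 2 + 16)) : t = 0 := by
  have hclear : ∀ c : ℤ, IsSquare (t ^ 2 + c) → IsSquare (t.num ^ 2 + c * (t.den : ℤ) ^ 2) := by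
    intro c hc
    have : ((t.num ^ 2 + c * (t.den : ℤ) ^ 2 : ℤ) : ℚ) = (t ^ 2 + c) * t.den ^ 2 := by
      push_cast
      rw [← Rat.mul_den_eq_num]
      ring
    rw [← Rat.isSquare_intCast_iff, this]
    exact hc.mul (IsSquare.sq _)
  by_contra ht
  exact not_isPrimitiveConcordantPair _ _ ⟨Rat.isCoprime_num_den t, Rat.num_ne_zero.mpr ht,
    Int.natCast_ne_zero.mpr t.den_nz, by simpa using hclear 1 (by simpa using h₁),
    by simpa using hclear 16 (by simpa using h₁₆)⟩

open WeierstrassCurve.Affine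

namespace E15A3

def affinePoints : Set (ℚ × ℚ) :=
  {(3/4, -7/8), (0, -2), (2, -4), (1, -1), (-3, 1), (0, 1), (2, 1)}

theorem equation_iff (x y : ℚ) :
    E15A3.toAffine.Equation x y ↔ y ^ 2 + x * y + y = x ^ 3 + x ^ 2 - 5 * x + 2 := by
  rw [WeierstrassCurve.Affine.equation_iff]
  simp [E15A3, sub_eq_add_neg]

theorem x_mul_sub_two_eq_zero {x y : ℚ} (h : E15A3.toAffine.Equation x y)
    (hv : 2 * y + x + 1 ≠ 0) : x * (x - 2) = 0 := by
  rw [equation_iff] at h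
  have hv2 : (2 * y + x + 1) ^ 2 = (x - 1) * (4 * x - 3) * (x + 3) := by
    linear_combination 4 * h
  have ht := Rat.eq_zero_of_isSquare_sq_add_one_of_isSquare_sq_add_sixteen
    (t := 2 * x * (x - 2) / (2 * y + x + 1))
    ⟨(2 * x ^ 2 - 3 * x + 3) / (2 * y + x + 1), by field_simp; linear_combination hv2⟩
    ⟨(2 * x ^ 2 + 12 * x - 12) / (2 * y + x + 1), by field_simp; linear_combination 16 * hv2⟩
  simpa [hv, mul_assoc] using ht

theorem mem_affinePoints_of_equation {x y : ℚ} (h : E15A3.toAffine.Equation x y) :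
    (x, y) ∈ affinePoints := by
  have h' := (equation_iff x y).mp h
  simp only [affinePoints, Set.mem_insert_iff, Set.mem_singleton_iff, Prod.mk.injEq]
  by_cases hv : 2 * y + x + 1 = 0
  · obtain rfl : y = -(x + 1) / 2 := by linarith
    have hx : (x - 1) * (x - 3 / 4) * (x - -3) = 0 := by linear_combination -h'
    simp only [mul_eq_zero, sub_eq_zero] at hx
    rcases hx with (rfl | rfl) | rfl <;> norm_num
  · rcases mul_eq_zero.mp (x_mul_sub_two_eq_zero h hv) with rfl | hx
    · have hy : (y - 1) * (y - -2) = 0 := by linear_combination h'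
      simp only [mul_eq_zero, sub_eq_zero] at hy
      rcases hy with rfl | rfl <;> norm_num
    · obtain rfl : x = 2 := sub_eq_zero.mp hx
      have hy : (y - 1) * (y - -4) = 0 := by linear_combination h'
      simp only [mul_eq_zero, sub_eq_zero] at hy
      rcases hy with rfl | rfl <;> norm_num

theorem equation_iff_mem_affinePoints (x y : ℚ) :
    E15A3.toAffine.Equation x y ↔ (x, y) ∈ affinePoints := by
  refine ⟨mem_affinePoints_of_equation, fun h ↦ ?_⟩
  simp only [affinePoints, Set.mem_insert_iff, Set.mem_singleton_iff, Prod.mk.injEq] at h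
  rw [equation_iff]
  rcases h with ⟨rfl, rfl⟩ | ⟨rfl, rfl⟩ | ⟨rfl, rfl⟩ | ⟨rfl, rfl⟩ | ⟨rfl, rfl⟩ | ⟨rfl, rfl⟩ |
    ⟨rfl, rfl⟩ <;> norm_num

instance : E15A3.IsElliptic :=
  ⟨isUnit_iff_ne_zero.mpr (by norm_num [E15A3, WeierstrassCurve.Δ, WeierstrassCurve.b₂,
    WeierstrassCurve.b₄, WeierstrassCurve.b₆, WeierstrassCurve.b₈])⟩

theorem card_point : Nat.card E15A3.toAffine.Point = 8 := by
  have e : {xy : ℚ × ℚ // E15A3.toAffine.Equation xy.1 xy.2} ≃ affinePoints :=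
    Equiv.subtypeEquivRight fun xy ↦ equation_iff_mem_affinePoints xy.1 xy.2
  have : Finite affinePoints := by rw [affinePoints]; infer_instance
  have : Finite {xy : ℚ × ℚ // E15A3.toAffine.Equation xy.1 xy.2} := .of_equiv _ e.symm
  rw [Nat.card_congr (pointEquiv E15A3.toAffine), WithZero, Finite.card_option,
    Nat.card_congr e, Nat.card_coe_set_eq, affinePoints]
  norm_num [Set.ncard_insert_of_notMem]


noncomputable def P : E15A3.toAffine.Point :=
  Point.mk (x := 0) (y := 1) ((equation_iff _ _).mpr (by norm_num))

noncomputable def T : E15A3.toAffine.Point :=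
  Point.mk (x := 1) (y := -1) ((equation_iff _ _).mpr (by norm_num))

noncomputable def Q : E15A3.toAffine.Point :=
  Point.mk (x := 3 / 4) (y := -7 / 8) ((equation_iff _ _).mpr (by norm_num))

theorem two_nsmul_P : 2 • P = T := by
  rw [two_nsmul, P, T, Point.mk, Point.mk, Point.add_self_of_Y_ne (by norm_num [negY, E15A3])]
  simp [addX, addY, negAddY, negY, E15A3]
  norm_num

theorem two_nsmul_T : 2 • T = 0 := by
  rw [two_nsmul, T, Point.mk, Point.add_self_of_Y_eq (by norm_num [negY, E15A3])]

theorem two_nsmul_Q : 2 • Q = 0 := by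
  rw [two_nsmul, Q, Point.mk, Point.add_self_of_Y_eq (by norm_num [negY, E15A3])]

theorem addOrderOf_P : addOrderOf P = 4 := by
  refine addOrderOf_eq_prime_pow (p := 2) (n := 1) ?_ ?_
  · rw [pow_one, two_nsmul_P, T, Point.mk]
    exact Point.some_ne_zero _
  · rw [pow_succ, mul_nsmul, pow_one, two_nsmul_P, two_nsmul_T]

theorem addOrderOf_Q : addOrderOf Q = 2 :=
  addOrderOf_eq_prime two_nsmul_Q (Point.some_ne_zero _)

theorem Q_ne_two_nsmul_P : Q ≠ 2 • P := by
  rw [two_nsmul_P, Q, T, Point.mk, Point.mk, ne_eq, Point.some.injEq]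
  norm_num

end E15A3

/-- The elliptic curve `y² + xy + y = x³ + x² − 5x + 2` over `ℚ` (15A3) has Mordell–Weil group
isomorphic to `ℤ/4ℤ × ℤ/2ℤ`; its rational points are exactly the point at infinity together with
the seven affine points `(3/4, -7/8)`, `(0,-2)`, `(2,-4)`, `(1,-1)`, `(-3,1)`, `(0,1)`,
`(2,1)`. -/
theorem E15A3_mordell_weil :
    (∀ x y : ℚ, E15A3.toAffine.Equation x y ↔
      (x, y) ∈ ({(3/4, -7/8), (0, -2), (2, -4), (1, -1), (-3, 1), (0, 1),
        (2, 1)} : Set (ℚ × ℚ))) ∧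
    Nonempty (E15A3.toAffine.Point ≃+ ZMod 4 × ZMod 2) :=
  ⟨E15A3.equation_iff_mem_affinePoints, nonempty_addEquiv_zmod_four_prod_zmod_two
    E15A3.card_point E15A3.addOrderOf_P E15A3.addOrderOf_Q E15A3.Q_ne_two_nsmul_P⟩
end

section
/- Let C be the smooth projective genus-1 curve over ℚ with affine model y² = −7(x⁴ − 10x³ + 27x² − 10x − 27). Then the only rational points of C are (5/2, 7/4) and (5/2, −7/4). -/
/-!
Substituting `2x - 5 = 7e/q` and `n = 4yq²/7` turns the curve into `n² = q⁴ + 294q²e² - 343e⁴`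
with `q, e` coprime and `7 ∤ q`, and the claim becomes `e = 0`. This follows by Fermat descent
along a 2-isogeny. Since `(q² + 147e²)² - n² = 2⁶·7³·e⁴`, splitting the two coprime factors into
fourth powers gives `e = uv` with `q² = v⁴ - 147u²v² + 5488u⁴` or `q² = 16u⁴ - 147u²v² + 343v⁴`,
quartic models of the isogenous curve. Completing the square there and factoring once more
produces a new solution `(d, c)` of the original quartic with `cd ∣ e` and `c < d`, so
`0 < c < e`. The parity cases the factorisations cannot handle are excluded modulo `128` and `16`.
-/

theorem Int.prime_seven : Prime (7 : ℤ) := Int.prime_ofNat_iff.mpr Nat.prime_seven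

theorem isCoprime_of_isCoprime_add_mul {R : Type*} [CommRing R] {a b : R}
    (h : IsCoprime (a + b) (a * b)) : IsCoprime a b :=
  (IsCoprime.of_add_mul_left_left (z := 1) (by simpa [add_comm] using h.of_mul_right_left)).symm

theorem pos_and_pos_of_mul_pos_of_add_pos {α : Type*} [Ring α] [LinearOrder α]
    [IsStrictOrderedRing α] {A B : α} (hmul : 0 < A * B) (hadd : 0 < A + B) :
    0 < A ∧ 0 < B :=
  (pos_and_pos_or_neg_and_neg_of_mul_pos hmul).resolve_right fun h =>
    lt_asymm (add_neg h.1 h.2) hadd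

theorem Prime.pow_dvd_of_isCoprime {R : Type*} [CommRing R] [IsDomain R] {p A B m : R}
    (hp : Prime p) (hAB : IsCoprime A B) (hpA : p ∣ A) (k : ℕ) (h : A * B = p ^ k * m) :
    p ^ k ∣ A :=
  hp.pow_dvd_of_dvd_mul_right k (fun hpB => hp.not_isUnit (hAB.isUnit_of_dvd' hpA hpB)) ⟨m, h⟩

theorem Int.exists_add_eq_sub_eq_mul_eq_of_sq_sub_sq {Z W M : ℤ} (h : Z ^ 2 - W ^ 2 = 4 * M) :
    ∃ A B, A + B = Z ∧ B - A = W ∧ A * B = M := by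
  have hZW : Even (Z - W) := by
    have : Even (Z ^ 2 - W ^ 2) := ⟨2 * M, by rw [h]; ring⟩
    simpa [Int.even_sub, Int.even_pow] using this
  obtain ⟨A, hA⟩ := hZW
  refine ⟨A, A + W, by linarith, by ring, ?_⟩
  have : 4 * (A * (A + W)) = 4 * M := by rw [← h]; linear_combination -(Z + W + 2 * A) * hA
  linarith

theorem Int.exists_nonneg_pow_eq_of_mul_eq_pow {A B w : ℤ} {k : ℕ} (hk : Even k) (hA : 0 < A)
    (hAB : IsCoprime A B) (h : A * B = w ^ k) : ∃ u, 0 ≤ u ∧ A = u ^ k := by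
  obtain ⟨d, unit, hd⟩ := exists_associated_pow_of_mul_eq_pow' hAB h
  rcases Int.isUnit_iff.1 unit.isUnit with h1 | h1 <;> rw [h1] at hd
  · exact ⟨|d|, abs_nonneg d, by rw [hk.pow_abs, ← hd, mul_one]⟩
  · linarith [hk.pow_nonneg d]

theorem Int.exists_eq_mul_pow_four {A B a b w : ℤ} (ha : 0 < a) (hb : 0 < b) (hA : 0 < A)
    (hw : 0 < w) (hAB : IsCoprime A B) (haA : a ∣ A) (hbB : b ∣ B) (h : A * B = a * b * w ^ 4) :
    ∃ u v, 0 < u ∧ 0 < v ∧ u * v = w ∧ A = a * u ^ 4 ∧ B = b * v ^ 4 := by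
  obtain ⟨A', rfl⟩ := haA
  obtain ⟨B', rfl⟩ := hbB
  have hA' : 0 < A' := pos_of_mul_pos_right hA ha.le
  have h' : A' * B' = w ^ 4 :=
    mul_left_cancel₀ (by positivity : a * b ≠ 0) (by linear_combination h)
  have hcop : IsCoprime A' B' := hAB.of_mul_left_right.of_mul_right_right
  have hB' : 0 < B' := pos_of_mul_pos_right (h'.symm ▸ by positivity) hA'.le
  obtain ⟨u, hu, rfl⟩ := Int.exists_nonneg_pow_eq_of_mul_eq_pow (by norm_num : Even 4) hA' hcop h'
  obtain ⟨v, hv, rfl⟩ := Int.exists_nonneg_pow_eq_of_mul_eq_pow (by norm_num : Even 4) hB'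
    hcop.symm (by rw [mul_comm, h'])
  have hu' : 0 < u := hu.lt_of_ne (by rintro rfl; simp at hA')
  have hv' : 0 < v := hv.lt_of_ne (by rintro rfl; simp at hB')
  refine ⟨u, v, hu', hv', ?_, rfl, rfl⟩
  exact (pow_left_inj₀ (by positivity) hw.le (by norm_num : 4 ≠ 0)).1 (by rw [mul_pow, h'])

theorem Rat.exists_intCast_eq_of_pow_eq_intCast {m : ℚ} {N : ℤ} {n : ℕ} (hn : n ≠ 0)
    (h : m ^ n = N) : ∃ M : ℤ, (M : ℚ) = m := by
  have hden : (m ^ n).den = 1 := by rw [h]; exact Rat.den_intCast N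
  rw [Rat.den_pow, pow_eq_one_iff, or_iff_left hn] at hden
  exact ⟨m.num, Rat.coe_int_num_of_den_eq_one hden⟩

namespace Xd7

def quarticForm (q e : ℤ) : ℤ := q ^ 4 + 294 * q ^ 2 * e ^ 2 - 343 * e ^ 4

def IsSolution (q e : ℤ) : Prop := IsCoprime q e ∧ ¬ 7 ∣ q ∧ IsSquare (quarticForm q e)

theorem IsSolution.abs {q e : ℤ} (h : IsSolution q e) : IsSolution |q| |e| := by
  obtain ⟨hqe, h7, hF⟩ := h
  refine ⟨hqe.abs_abs, by rwa [dvd_abs], ?_⟩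
  unfold quarticForm at hF ⊢
  simpa only [Even.pow_abs ⟨2, rfl⟩, Even.pow_abs ⟨1, rfl⟩] using hF

theorem sq_lt_sq_of_isSquare_quarticForm {q e : ℤ} (he : e ≠ 0)
    (h : IsSquare (quarticForm q e)) : e ^ 2 < q ^ 2 := by
  obtain ⟨n, hn⟩ := h
  unfold quarticForm at hn
  by_contra! hqe
  have he2 : 0 < e ^ 2 := by positivity
  nlinarith [mul_le_mul hqe hqe (sq_nonneg q) (sq_nonneg e), mul_self_nonneg n,
    mul_le_mul_of_nonneg_left hqe (sq_nonneg e), mul_pos he2 he2]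

set_option maxRecDepth 2000 in
theorem not_isSquare_quarticForm_of_odd {q e : ℤ} (hq : Odd q) (he : Odd e) :
    ¬ IsSquare (quarticForm q e) := by
  rintro ⟨n, hn⟩
  obtain ⟨α, hα⟩ := Int.eight_dvd_sq_sub_one_of_odd hq
  obtain ⟨β, hβ⟩ := Int.eight_dvd_sq_sub_one_of_odd he
  obtain ⟨γ, hγ⟩ := Int.even_mul_succ_self α
  obtain ⟨δ, hδ⟩ := Int.even_mul_succ_self β
  -- `quarticForm q e ≡ 80 (mod 128)`, using that odd squares are `1 (mod 8)`.
  have h128 : (128 : ℤ) ∣ n * n + 48 := by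
    refine ⟨γ + 18 * α + 147 * α * β + 147 * β - 343 * δ, ?_⟩
    unfold quarticForm at hn
    linear_combination -hn + (q ^ 2 + 8 * α + 1 + 294 * e ^ 2) * hα
      + (294 * (8 * α + 1) - 343 * (e ^ 2 + 8 * β + 1)) * hβ + 64 * hγ - 21952 * hδ
  have key : ∀ m : ZMod 128, m * m + 48 ≠ 0 := by decide
  exact key n (by exact_mod_cast (ZMod.intCast_zmod_eq_zero_iff_dvd _ 128).2 h128)

theorem odd_of_isSolution {q e : ℤ} (h : IsSolution q e) : Odd (q ^ 2 + 147 * e ^ 2) := by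
  obtain ⟨hqe, -, hF⟩ := h
  rcases Int.even_or_odd q with hq | hq <;> rcases Int.even_or_odd e with he | he
  · exact absurd (hqe.isUnit_of_dvd' hq.two_dvd he.two_dvd) Int.prime_two.not_isUnit
  · exact (hq.pow_of_ne_zero two_ne_zero).add_odd ((by decide : Odd (147 : ℤ)).mul he.pow)
  · exact hq.pow.add_even ((he.pow_of_ne_zero two_ne_zero).mul_left 147)
  · exact absurd hF (not_isSquare_quarticForm_of_odd hq he)

theorem isCoprime_343_mul_pow_four {q t : ℤ} (h7 : ¬ 7 ∣ q) (hqt : IsCoprime q t) :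
    IsCoprime q (343 * t ^ 4) := by
  have := ((Irreducible.coprime_iff_not_dvd Int.prime_seven.irreducible).2 h7).symm.pow_right
    (n := 3)
  exact (by norm_num : (343 : ℤ) = 7 ^ 3) ▸ this.mul_right hqt.pow_right

theorem exists_pow_four_of_mul_eq_5488 {A B e : ℤ} (hA : 0 < A) (hB : 0 < B) (he : 0 < e)
    (hAB : IsCoprime A B) (h : A * B = 5488 * e ^ 4) :
    ∃ u v, 0 < u ∧ 0 < v ∧ u * v = e ∧
      (A + B = 5488 * u ^ 4 + v ^ 4 ∨ A + B = 16 * u ^ 4 + 343 * v ^ 4) := by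
  wlog h2A : 2 ∣ A generalizing A B
  · have h2B : 2 ∣ B :=
      (Int.prime_two.dvd_mul.1 ⟨2744 * e ^ 4, by rw [h]; ring⟩).resolve_left h2A
    simpa only [add_comm B A] using this hB hA hAB.symm (by rw [mul_comm, h]) h2B
  have h16 : (16 : ℤ) ∣ A :=
    Int.prime_two.pow_dvd_of_isCoprime hAB h2A 4 (m := 343 * e ^ 4) (by rw [h]; ring)
  rcases Int.prime_seven.dvd_mul.1 ⟨784 * e ^ 4, by rw [h]; ring⟩ with h7A | h7B
  · have h343 : (343 : ℤ) ∣ A :=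
      Int.prime_seven.pow_dvd_of_isCoprime hAB h7A 3 (m := 16 * e ^ 4) (by rw [h]; ring)
    have h5488 : (5488 : ℤ) ∣ A := by
      simpa using (Int.isCoprime_iff_gcd_eq_one.2 (by norm_num) : IsCoprime (16 : ℤ) 343).mul_dvd
        h16 h343
    obtain ⟨u, v, hu, hv, huv, rfl, rfl⟩ := Int.exists_eq_mul_pow_four (by norm_num) one_pos hA he
      hAB h5488 (one_dvd B) (by rw [h]; ring)
    exact ⟨u, v, hu, hv, huv, Or.inl (by ring)⟩
  · have h343 : (343 : ℤ) ∣ B := Int.prime_seven.pow_dvd_of_isCoprime hAB.symm h7B 3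
      (m := 16 * e ^ 4) (by rw [mul_comm, h]; ring)
    obtain ⟨u, v, hu, hv, huv, rfl, rfl⟩ := Int.exists_eq_mul_pow_four (by norm_num)
      (by norm_num) hA he hAB h16 h343 (by rw [h]; ring)
    exact ⟨u, v, hu, hv, huv, Or.inr rfl⟩

theorem exists_isogenous_of_isSolution {q e : ℤ} (hq : 0 < q) (he : 0 < e)
    (h : IsSolution q e) :
    ∃ u v, 0 < u ∧ 0 < v ∧ u * v = e ∧
      (q ^ 2 = v ^ 4 - 147 * u ^ 2 * v ^ 2 + 5488 * u ^ 4 ∨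
        q ^ 2 = 16 * u ^ 4 - 147 * u ^ 2 * v ^ 2 + 343 * v ^ 4 ∧ Odd v) := by
  have hX := odd_of_isSolution h
  obtain ⟨hqe, h7, n, hn⟩ := h
  obtain ⟨A, B, hsum, -, hprod⟩ := Int.exists_add_eq_sub_eq_mul_eq_of_sq_sub_sq
    (Z := q ^ 2 + 147 * e ^ 2) (W := n) (M := 5488 * e ^ 4)
    (by unfold quarticForm at hn; linear_combination hn)
  obtain ⟨hA, hB⟩ := pos_and_pos_of_mul_pos_of_add_pos (by rw [hprod]; positivity)
    (by rw [hsum]; positivity)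
  have hcop : IsCoprime A B := by
    refine isCoprime_of_isCoprime_add_mul ?_
    rw [hsum, hprod, show (5488 : ℤ) * e ^ 4 = 2 ^ 4 * (343 * e ^ 4) by ring]
    refine .mul_right (Int.isCoprime_two_right.2 hX).pow_right (isCoprime_343_mul_pow_four ?_ ?_)
    · exact fun h7X => h7 (Int.prime_seven.dvd_of_dvd_pow (n := 2)
        ((dvd_add_left ⟨21 * e ^ 2, by ring⟩).1 h7X))
    · have := (hqe.pow_left (m := 2)).add_mul_left_left (147 * e)
      rwa [show q ^ 2 + e * (147 * e) = q ^ 2 + 147 * e ^ 2 by ring] at this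
  obtain ⟨u, v, hu, hv, rfl, hcases⟩ := exists_pow_four_of_mul_eq_5488 hA hB he hcop hprod
  refine ⟨u, v, hu, hv, rfl,
    hcases.imp (fun h => by linear_combination h - hsum) fun h => ⟨?_, ?_⟩⟩
  · linear_combination h - hsum
  · rw [← hsum, h] at hX
    have h343 := hX.sub_even (⟨8 * u ^ 4, by ring⟩ : Even (16 * u ^ 4))
    rw [add_sub_cancel_left] at h343
    exact (Int.odd_pow.1 (Int.odd_mul.1 h343).2).resolve_right four_ne_zero

theorem exists_pow_four_of_mul_eq_343 {A B t : ℤ} (hA : 0 < A) (hB : 0 < B) (ht : 0 < t)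
    (hAB : IsCoprime A B) (h : A * B = 343 * t ^ 4) :
    ∃ c d, 0 < c ∧ 0 < d ∧ c * d = t ∧ IsCoprime (7 * c) d ∧
      (A = 343 * c ^ 4 ∧ B = d ^ 4 ∨ A = d ^ 4 ∧ B = 343 * c ^ 4) := by
  wlog h7A : 7 ∣ A generalizing A B
  · have h7B : 7 ∣ B :=
      (Int.prime_seven.dvd_mul.1 ⟨49 * t ^ 4, by rw [h]; ring⟩).resolve_left h7A
    obtain ⟨c, d, hc, hd, hcd, hcop, hcases⟩ := this hB hA hAB.symm (by rw [mul_comm, h]) h7B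
    exact ⟨c, d, hc, hd, hcd, hcop, hcases.symm.imp And.symm And.symm⟩
  have h343 : (343 : ℤ) ∣ A :=
    Int.prime_seven.pow_dvd_of_isCoprime hAB h7A 3 (m := t ^ 4) (by rw [h]; norm_num)
  obtain ⟨c, d, hc, hd, hcd, rfl, rfl⟩ :=
    Int.exists_eq_mul_pow_four (by norm_num) one_pos hA ht hAB h343 (one_dvd B) (by rw [h]; ring)
  refine ⟨c, d, hc, hd, hcd, ?_, Or.inl ⟨rfl, one_mul _⟩⟩
  exact (hAB.of_isCoprime_of_dvd_left ⟨49 * c ^ 3, by ring⟩).of_isCoprime_of_dvd_right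
    ⟨d ^ 3, by ring⟩

theorem sq_ne_of_isCoprime {c d : ℤ} (hcd : IsCoprime c d) (w : ℤ) :
    w ^ 2 ≠ 343 * c ^ 4 + 294 * c ^ 2 * d ^ 2 - d ^ 4 := by
  have hodd : Odd c ∨ Odd d := by
    by_contra! h
    simp only [Int.not_odd_iff_even] at h
    exact Int.prime_two.not_isUnit (hcd.isUnit_of_dvd' h.1.two_dvd h.2.two_dvd)
  have key : ∀ c d w : ZMod 16, Odd c ∨ Odd d →
      w ^ 2 ≠ 343 * c ^ 4 + 294 * c ^ 2 * d ^ 2 - d ^ 4 := by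
    unfold Odd
    decide
  intro h
  refine key c d w (hodd.imp (Odd.map (Int.castRingHom _)) (Odd.map (Int.castRingHom _))) ?_
  exact_mod_cast congrArg (Int.cast : ℤ → ZMod 16) h

theorem exists_isSolution_of_mul_eq_343 {A B t w : ℤ} (hA : 0 < A) (hB : 0 < B) (ht : 0 < t)
    (hAB : IsCoprime A B) (h : A * B = 343 * t ^ 4) (hw : w ^ 2 = B - A + 294 * t ^ 2) :
    ∃ c d, 0 < c ∧ 0 < d ∧ c * d = t ∧ IsSolution d c := by
  obtain ⟨c, d, hc, hd, rfl, hcop, hcases⟩ := exists_pow_four_of_mul_eq_343 hA hB ht hAB h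
  refine ⟨c, d, hc, hd, rfl, hcop.of_mul_left_right.symm,
    (Irreducible.coprime_iff_not_dvd Int.prime_seven.irreducible).1 hcop.of_mul_left_left, ?_⟩
  rcases hcases with ⟨rfl, rfl⟩ | ⟨rfl, rfl⟩
  · exact ⟨w, by unfold quarticForm; linear_combination -hw⟩
  · exact absurd (by linear_combination hw) (sq_ne_of_isCoprime hcop.of_mul_left_right w)

theorem exists_isSolution_of_sq_sub_sq_eq_four_mul {q t S w : ℤ} (hq : 0 < q) (ht : 0 < t)
    (h7 : ¬ 7 ∣ q) (hqt : IsCoprime q t) (h : q ^ 2 - S ^ 2 = 4 * (343 * t ^ 4))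
    (hw : w ^ 2 = S + 294 * t ^ 2) :
    ∃ c d, 0 < c ∧ 0 < d ∧ c * d = t ∧ IsSolution d c := by
  obtain ⟨A, B, hsum, hdiff, hprod⟩ := Int.exists_add_eq_sub_eq_mul_eq_of_sq_sub_sq h
  obtain ⟨hA, hB⟩ := pos_and_pos_of_mul_pos_of_add_pos (by rw [hprod]; positivity)
    (by rw [hsum]; exact hq)
  refine exists_isSolution_of_mul_eq_343 hA hB ht ?_ hprod (by rw [hdiff]; exact hw)
  exact isCoprime_of_isCoprime_add_mul (hsum ▸ hprod ▸ isCoprime_343_mul_pow_four h7 hqt)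

theorem exists_isSolution_of_sq_sub_sq_eq {q t W w : ℤ} (k : ℕ) (hq : 0 < q) (ht : 0 < t)
    (htodd : Odd t) (h7 : ¬ 7 ∣ q) (hqt : IsCoprime q t)
    (h : (2 ^ k * q) ^ 2 - W ^ 2 = 343 * t ^ 4) (hw : w ^ 2 = 2 * W + 294 * t ^ 2) :
    ∃ c d, 0 < c ∧ 0 < d ∧ c * d = t ∧ IsSolution d c := by
  have hprod : (2 ^ k * q - W) * (2 ^ k * q + W) = 343 * t ^ 4 := by rw [← h]; ring
  obtain ⟨hA, hB⟩ := pos_and_pos_of_mul_pos_of_add_pos (by rw [hprod]; positivity)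
    (by ring_nf; positivity)
  refine exists_isSolution_of_mul_eq_343 hA hB ht ?_ hprod (by rw [hw]; ring)
  refine isCoprime_of_isCoprime_add_mul ?_
  rw [hprod, show 2 ^ k * q - W + (2 ^ k * q + W) = 2 ^ (k + 1) * q by ring]
  refine .mul_left (Int.isCoprime_two_left.2 ?_).pow_left (isCoprime_343_mul_pow_four h7 hqt)
  exact (by decide : Odd (343 : ℤ)).mul htodd.pow

theorem exists_isSolution_lt {q e : ℤ} (hq : 0 < q) (he : 0 < e) (h : IsSolution q e) :
    ∃ c d, 0 < c ∧ c < e ∧ IsSolution d c := by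
  suffices ∃ c d t, 0 < c ∧ 0 < d ∧ c * d = t ∧ t ∣ e ∧ IsSolution d c by
    obtain ⟨c, d, t, hc, hd, rfl, hte, hsol⟩ := this
    have hcd : c < d := (pow_lt_pow_iff_left₀ hc.le hd.le two_ne_zero).1
      (sq_lt_sq_of_isSquare_quarticForm hc.ne' hsol.2.2)
    exact ⟨c, d, hc, by nlinarith [Int.le_of_dvd he hte], hsol⟩
  have h7 := h.2.1
  obtain ⟨u, v, hu, hv, rfl, hcases⟩ := exists_isogenous_of_isSolution hq he h
  have hqu : IsCoprime q u := h.1.of_mul_right_left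
  rcases hcases with hV1 | ⟨hV2, hvodd⟩
  · rcases Int.even_or_odd u with hueven | huodd
    · obtain ⟨r, rfl⟩ := hueven.two_dvd
      obtain ⟨c, d, hc, hd, hcd, hsol⟩ := exists_isSolution_of_sq_sub_sq_eq_four_mul
        (S := v ^ 2 - 294 * r ^ 2) (w := v) hq (by omega) h7 hqu.of_mul_right_right
        (by linear_combination hV1) (by ring)
      exact ⟨c, d, r, hc, hd, hcd, ⟨2 * v, by ring⟩, hsol⟩
    · obtain ⟨c, d, hc, hd, hcd, hsol⟩ := exists_isSolution_of_sq_sub_sq_eq 1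
        (W := 2 * v ^ 2 - 147 * u ^ 2) (w := 2 * v) hq hu huodd h7 hqu
        (by linear_combination 4 * hV1) (by ring)
      exact ⟨c, d, u, hc, hd, hcd, dvd_mul_right u v, hsol⟩
  · obtain ⟨c, d, hc, hd, hcd, hsol⟩ := exists_isSolution_of_sq_sub_sq_eq 3
      (W := 32 * u ^ 2 - 147 * v ^ 2) (w := 8 * u) hq hv hvodd h7 h.1.of_mul_right_right
      (by linear_combination 64 * hV2) (by ring)
    exact ⟨c, d, v, hc, hd, hcd, dvd_mul_left v u, hsol⟩

theorem IsSolution.eq_zero {q e : ℤ} (h : IsSolution q e) : e = 0 := by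
  induction hk : e.natAbs using Nat.strong_induction_on generalizing q e with
  | _ k ih =>
  by_contra he
  have hq : q ≠ 0 := by rintro rfl; exact h.2.1 (dvd_zero 7)
  obtain ⟨c, d, hc, hce, hsol⟩ := exists_isSolution_lt (abs_pos.2 hq) (abs_pos.2 he) h.abs
  refine hc.ne' (ih _ ?_ hsol rfl)
  rw [← hk, ← Int.natAbs_abs e]
  exact Int.natAbs_lt_natAbs_of_nonneg_of_lt hc.le hce

theorem eq_zero_of_isCoprime_of_sq_eq {p q m : ℤ} (hpq : IsCoprime p q)
    (h : m ^ 2 = -7 * p ^ 4 + 294 * p ^ 2 * q ^ 2 + 49 * q ^ 4) : p = 0 := by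
  obtain ⟨m, rfl⟩ : 7 ∣ m := Int.prime_seven.dvd_of_dvd_pow (n := 2)
    ⟨-p ^ 4 + 42 * p ^ 2 * q ^ 2 + 7 * q ^ 4, by rw [h]; ring⟩
  obtain ⟨e, rfl⟩ : 7 ∣ p := Int.prime_seven.dvd_of_dvd_pow (n := 4)
    ⟨6 * p ^ 2 * q ^ 2 + q ^ 4 - m ^ 2, by linarith⟩
  have hsol : IsSolution q e := by
    refine ⟨hpq.of_mul_left_right.symm, fun h7q => Int.prime_seven.not_isUnit
      (hpq.isUnit_of_dvd' (dvd_mul_right 7 e) h7q), m, ?_⟩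
    have : 49 * quarticForm q e = 49 * (m * m) := by unfold quarticForm; linear_combination -h
    exact mul_left_cancel₀ (by norm_num) this
  rw [hsol.eq_zero, mul_zero]

theorem eq_zero_of_sq_eq {s y : ℚ} (h : y ^ 2 = -7 * s ^ 4 + 294 * s ^ 2 + 49) : s = 0 := by
  have hnum : (s.num : ℚ) = s * s.den := (div_eq_iff (by simp)).1 (Rat.num_div_den s)
  have hm : (y * s.den ^ 2) ^ 2
      = ((-7 * s.num ^ 4 + 294 * s.num ^ 2 * s.den ^ 2 + 49 * s.den ^ 4 : ℤ) : ℚ) := by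
    push_cast
    rw [hnum]
    linear_combination (s.den : ℚ) ^ 4 * h
  obtain ⟨M, hM⟩ := Rat.exists_intCast_eq_of_pow_eq_intCast two_ne_zero hm
  rw [← hM] at hm
  have hpq : IsCoprime s.num s.den := by
    rw [Int.isCoprime_iff_gcd_eq_one]
    exact s.reduced
  exact Rat.num_eq_zero.1 (eq_zero_of_isCoprime_of_sq_eq hpq (by exact_mod_cast hm))

end Xd7

/-- The only rational points of (the smooth projective model of) the genus-1 curve
`y² = −7(x⁴ − 10x³ + 27x² − 10x − 27)` are `(5/2, 7/4)` and `(5/2, −7/4)`.  (The two points at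
infinity of the smooth projective model are defined over `ℚ(√−7)` and are not rational, so the
rational points are exactly the affine solutions.) -/
theorem Xd7_rational_points :
    {P : ℚ × ℚ | P.2 ^ 2 = -7 * (P.1 ^ 4 - 10 * P.1 ^ 3 + 27 * P.1 ^ 2 - 10 * P.1 - 27)} =
      {(5/2, 7/4), (5/2, -7/4)} := by
  ext ⟨x, y⟩
  simp only [Set.mem_ofPred_eq, Set.mem_insert_iff, Set.mem_singleton_iff, Prod.mk.injEq]
  constructor
  · intro h
    have hx : x = 5 / 2 := by
      have := Xd7.eq_zero_of_sq_eq (s := 2 * x - 5) (y := 4 * y) (by linear_combination 16 * h)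
      linarith
    subst hx
    have hy : (y - 7 / 4) * (y + 7 / 4) = 0 := by linear_combination h
    rcases mul_eq_zero.1 hy with hy | hy
    · exact Or.inl ⟨rfl, by linarith⟩
    · exact Or.inr ⟨rfl, by linarith⟩
  · rintro (⟨rfl, rfl⟩ | ⟨rfl, rfl⟩) <;> norm_num
end

section
/- Let C be the smooth projective genus-1 curve over ℚ with affine model y² = 7(16x⁴ + 68x³ + 111x² + 62x + 11). Then the only rational points of C are (−1/3, 14/9) and (−1/3, −14/9). -/
/-!
Write `x = a / b` in lowest terms. A rational point gives `7 F(a, b) = r²` for the binary quartic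
`F`, so `r = 7s` and `F(a, b) = 7s²`; reducing mod 7 forces `3a + b = 7v`, and then
`s² = H(7v - a, v)` with `H(v, m) = 4v⁴ - 147v²m² + 1372m⁴`. Everything thus comes down to `m = 0`
for primitive solutions of `Z² = H(v, m)`, proved by infinite descent through `H` and two
companion quartics `G`, `D`: `H(v, 2m) = 4 G(v, m)`, `G(2v, m) = 4 H(v, m)`, a solution of
`Z² = G(w, 2m)` gives `w² = D(f, e)` with `|e| ≤ |m|`, and a solution of `y² = D(t, s)` gives
`(2t)² = H(f, e)` with `|e| ≤ 2|s|`.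

Each step writes the equation as `X² - Y² = 7³M⁴` (or `4 · 7³M⁴`) and splits the coprime factors
`X ± Y` (or their halves) as `7³e⁴` and `f⁴`. Coprimality at 7 holds because
`Z² = x⁴ + 7²a x²y² + 7³b y⁴` with `7 ∣ x` forces `7 ∣ y`. Every assignment of the two factors
except the one continuing the descent is impossible modulo 8, 16 or 32; for odd `m` none survives.
-/

section

variable {R : Type*} [CommRing R]

theorem isCoprime_of_sq_eq_sq_add_left {X Y N : R} (h : X ^ 2 = Y ^ 2 + N) (hN : IsCoprime X N) :
    IsCoprime X Y :=
  (IsCoprime.pow_right_iff two_pos).1 <| by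
    rw [show Y ^ 2 = -N + X * X by linear_combination -h]
    exact hN.neg_right.add_mul_left_right X

theorem isCoprime_of_sq_eq_sq_add_right {X Y N : R} (h : X ^ 2 = Y ^ 2 + N)
    (hN : IsCoprime Y N) : IsCoprime X Y :=
  IsCoprime.symm <| (IsCoprime.pow_right_iff two_pos).1 <| by
    rw [show X ^ 2 = N + Y * Y by linear_combination h]
    exact hN.add_mul_left_right Y

variable [IsDomain R]

theorem Prime.dvd_of_sq_eq_pow_three_mul {p Z N : R} (hp : Prime p) (h : Z ^ 2 = p ^ 3 * N) :
    p ∣ N := by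
  obtain ⟨Z, rfl⟩ : p ∣ Z := hp.dvd_of_dvd_pow (n := 2) ⟨p ^ 2 * N, by rw [h]; ring⟩
  have h' : Z ^ 2 = p * N :=
    mul_left_cancel₀ (pow_ne_zero 2 hp.ne_zero) (by linear_combination h)
  obtain ⟨Z, rfl⟩ : p ∣ Z := hp.dvd_of_dvd_pow ⟨N, h'⟩
  exact ⟨Z ^ 2, mul_left_cancel₀ hp.ne_zero (by linear_combination -h')⟩

theorem Prime.dvd_of_sq_eq_quartic {p Z x y a b : R} (hp : Prime p) (hb : ¬ p ∣ b)
    (h : Z ^ 2 = x ^ 4 + p ^ 2 * a * x ^ 2 * y ^ 2 + p ^ 3 * b * y ^ 4) (hx : p ∣ x) :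
    p ∣ y := by
  obtain ⟨x, rfl⟩ := hx
  have hN : p ∣ p * (x ^ 4 + a * x ^ 2 * y ^ 2) + b * y ^ 4 :=
    hp.dvd_of_sq_eq_pow_three_mul (by rw [h]; ring)
  have hby : p ∣ b * y ^ 4 := (dvd_add_right (dvd_mul_right _ _)).1 hN
  exact hp.dvd_of_dvd_pow ((hp.dvd_or_dvd hby).resolve_left hb)

end

namespace Int

theorem exists_eq_pow_four_of_mul_eq {p P Q M : ℤ} (hp : Prime p) (hp0 : 0 < p) (hM : M ≠ 0)
    (hPQ : IsCoprime P Q) (hsum : 0 ≤ P + Q) (h : P * Q = p ^ 3 * M ^ 4) :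
    ∃ e f, IsCoprime e f ∧ (e * f).natAbs = M.natAbs ∧
      (P = p ^ 3 * e ^ 4 ∧ Q = f ^ 4 ∨ P = f ^ 4 ∧ Q = p ^ 3 * e ^ 4) := by
  wlog hpP : p ∣ P generalizing P Q
  · obtain ⟨e, f, hef, hM', hQP⟩ := this hPQ.symm (by linarith) (by linear_combination h)
      ((hp.dvd_or_dvd ⟨p ^ 2 * M ^ 4, by rw [h]; ring⟩).resolve_left hpP)
    exact ⟨e, f, hef, hM', by tauto⟩
  obtain ⟨hP, hQ⟩ : 0 < P ∧ 0 < Q :=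
    (pos_and_pos_or_neg_and_neg_of_mul_pos (h ▸ by positivity)).resolve_right
      fun hneg => by linarith [hneg.1, hneg.2]
  have hpQ : IsCoprime p Q :=
    hp.coprime_iff_not_dvd.2 fun hpQ => hp.not_isUnit (hPQ.isUnit_of_dvd' hpP hpQ)
  -- The extra factor `p` turns `P * Q` into a fourth power of coprime factors `p * P` and `Q`.
  have hpow : p * P * Q = (p * M) ^ 4 := by linear_combination p * h
  obtain ⟨d, hd⟩ := exists_associated_pow_of_mul_eq_pow' (hpQ.mul_left hPQ) hpow
  obtain ⟨f, hf⟩ := exists_associated_pow_of_mul_eq_pow' (hpQ.mul_left hPQ).symm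
    (by rw [mul_comm]; exact hpow)
  replace hd := eq_of_associated_of_nonneg hd (by positivity) (by positivity)
  replace hf := eq_of_associated_of_nonneg hf (by positivity) hQ.le
  obtain ⟨e, rfl⟩ : p ∣ d := hp.dvd_of_dvd_pow ⟨P, hd⟩
  obtain rfl : P = p ^ 3 * e ^ 4 := mul_left_cancel₀ hp.ne_zero (by linear_combination -hd)
  subst hf
  have hef : (e * f) ^ 4 = M ^ 4 :=
    mul_left_cancel₀ (pow_ne_zero 3 hp.ne_zero) (by linear_combination h)
  refine ⟨e, f, (IsCoprime.pow_iff four_pos four_pos).1 hPQ.of_mul_left_right, ?_,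
    .inl ⟨rfl, rfl⟩⟩
  exact Nat.pow_left_injective four_ne_zero
    (by simpa only [natAbs_pow] using congrArg natAbs hef)

theorem exists_of_sq_eq_sq_add_pow_three_mul {p X Y M : ℤ} (hp : Prime p) (hp0 : 0 < p)
    (hM : M ≠ 0) (hXY : IsCoprime X Y) (hodd : Odd (X + Y)) (hX : 0 ≤ X)
    (h : X ^ 2 = Y ^ 2 + p ^ 3 * M ^ 4) :
    ∃ e f, (e * f).natAbs = M.natAbs ∧
      (2 * Y = f ^ 4 - p ^ 3 * e ^ 4 ∨ 2 * Y = p ^ 3 * e ^ 4 - f ^ 4) := by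
  have hcop : IsCoprime (X - Y) (X + Y) := by
    obtain ⟨u, v, huv⟩ := hXY
    obtain ⟨k, hk⟩ := hodd
    exact ⟨-k * (u - v), 1 - k * (u + v), by linear_combination hk - 2 * k * huv⟩
  obtain ⟨e, f, -, hef, hPQ⟩ :=
    exists_eq_pow_four_of_mul_eq hp hp0 hM hcop (by linarith) (by linear_combination h)
  refine ⟨e, f, hef, ?_⟩
  rcases hPQ with ⟨h1, h2⟩ | ⟨h1, h2⟩
  · exact .inl (by linear_combination h2 - h1)
  · exact .inr (by linear_combination h2 - h1)

theorem exists_of_sq_eq_sq_add_four_mul_pow_three_mul {p X Y M : ℤ} (hp : Prime p)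
    (hp0 : 0 < p) (hM : M ≠ 0) (hXY : IsCoprime X Y) (hXodd : Odd X) (hX : 0 ≤ X)
    (h : X ^ 2 = Y ^ 2 + 4 * p ^ 3 * M ^ 4) :
    ∃ e f, IsCoprime e f ∧ (e * f).natAbs = M.natAbs ∧ X = p ^ 3 * e ^ 4 + f ^ 4 ∧
      (Y = f ^ 4 - p ^ 3 * e ^ 4 ∨ Y = p ^ 3 * e ^ 4 - f ^ 4) := by
  have hYodd : Odd Y := by
    refine (odd_pow' two_ne_zero).1 ?_
    rw [show Y ^ 2 = X ^ 2 - 2 * (2 * p ^ 3 * M ^ 4) by linear_combination -h]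
    exact hXodd.pow.sub_even (even_two_mul _)
  obtain ⟨a, rfl⟩ := hXodd
  obtain ⟨b, rfl⟩ := hYodd
  have hcop : IsCoprime (a - b) (a + b + 1) := by
    obtain ⟨u, v, huv⟩ := hXY
    exact ⟨u - v, u + v, by linear_combination huv⟩
  obtain ⟨e, f, hef, hM', hPQ⟩ :=
    exists_eq_pow_four_of_mul_eq hp hp0 hM hcop (by linarith) (by linarith)
  refine ⟨e, f, hef, hM', ?_⟩
  rcases hPQ with ⟨h1, h2⟩ | ⟨h1, h2⟩
  · exact ⟨by linear_combination h1 + h2, .inl (by linear_combination h2 - h1)⟩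
  · exact ⟨by linear_combination h1 + h2, .inr (by linear_combination h2 - h1)⟩

theorem exists_sq_eq_of_sq_eq_four_mul {Z N : ℤ} (h : Z ^ 2 = 4 * N) : ∃ W, W ^ 2 = N := by
  obtain ⟨W, rfl⟩ : 2 ∣ Z := prime_two.dvd_of_dvd_pow (n := 2) ⟨2 * N, by rw [h]; ring⟩
  exact ⟨W, mul_left_cancel₀ four_ne_zero (by linear_combination h)⟩

end Int

namespace Xe7

def F (a b : ℤ) : ℤ :=
  16 * a ^ 4 + 68 * a ^ 3 * b + 111 * a ^ 2 * b ^ 2 + 62 * a * b ^ 3 + 11 * b ^ 4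

def H (v m : ℤ) : ℤ := 4 * v ^ 4 - 147 * v ^ 2 * m ^ 2 + 1372 * m ^ 4

def G (w m : ℤ) : ℤ := w ^ 4 - 147 * w ^ 2 * m ^ 2 + 5488 * m ^ 4

def D (t s : ℤ) : ℤ := t ^ 4 + 294 * t ^ 2 * s ^ 2 - 343 * s ^ 4

def D' (t s : ℤ) : ℤ := 343 * s ^ 4 + 294 * t ^ 2 * s ^ 2 - t ^ 4

theorem F_seven_mul_sub (a v : ℤ) : F a (7 * v - 3 * a) = 7 * H (7 * v - a) v := by
  unfold F H; ring

theorem H_two_mul_right (v m : ℤ) : H v (2 * m) = 4 * G v m := by unfold H G; ring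

theorem G_two_mul_left (v m : ℤ) : G (2 * v) m = 4 * H v m := by unfold H G; ring

theorem prime_seven : Prime (7 : ℤ) := by norm_num

theorem seven_dvd_of_seven_dvd_F {a b : ℤ} (h : 7 ∣ F a b) : 7 ∣ 3 * a + b := by
  have key : ∀ a b : ZMod 7,
      16 * a ^ 4 + 68 * a ^ 3 * b + 111 * a ^ 2 * b ^ 2 + 62 * a * b ^ 3 + 11 * b ^ 4 = 0 →
        3 * a + b = 0 := by decide
  have h7 := (ZMod.intCast_zmod_eq_zero_iff_dvd _ 7).2 h
  push_cast [F] at h7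
  exact (ZMod.intCast_zmod_eq_zero_iff_dvd _ 7).1 (by push_cast; exact key _ _ h7)

theorem seven_dvd_of_sq_eq_G {Z w m : ℤ} (h : Z ^ 2 = G w m) (hw : 7 ∣ w) : 7 ∣ m :=
  prime_seven.dvd_of_sq_eq_quartic (a := -3) (b := 16) (by norm_num) (by rw [h]; unfold G; ring) hw

theorem seven_dvd_of_sq_eq_D {y t s : ℤ} (h : y ^ 2 = D t s) (ht : 7 ∣ t) : 7 ∣ s :=
  prime_seven.dvd_of_sq_eq_quartic (a := 6) (b := -1) (by norm_num) (by rw [h]; unfold D; ring) ht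

theorem four_mul_sq_ne_D {w e f : ℤ} (he : Odd e) (hf : Odd f) : 4 * w ^ 2 ≠ D f e := by
  obtain ⟨a, rfl⟩ := he
  obtain ⟨b, rfl⟩ := hf
  intro h
  -- `D f e = (f² + 147e²)² - 2⁶·7³·e⁴` with `f² + 147e² = 4k`, `k` odd, so `w² ≡ 4 - 16` mod 32.
  have hw : w ^ 2 = 4 * (b ^ 2 + b + 147 * (a ^ 2 + a) + 37) ^ 2 - 5488 * (2 * a + 1) ^ 4 := by
    unfold D at h; linarith
  have h32 := congrArg (Int.cast : ℤ → ZMod 32) hw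
  push_cast at h32
  rw [(by decide : ∀ a b : ZMod 32,
    4 * (b ^ 2 + b + 147 * (a ^ 2 + a) + 37) ^ 2 - 5488 * (2 * a + 1) ^ 4 = 20)] at h32
  exact (by decide : ∀ x : ZMod 32, x ^ 2 ≠ 20) _ h32

theorem four_mul_sq_ne_D' {w e f : ℤ} (he : Odd e) (hf : Odd f) : 4 * w ^ 2 ≠ D' f e := by
  obtain ⟨a, rfl⟩ := he
  obtain ⟨b, rfl⟩ := hf
  intro h
  have h16 := congrArg (Int.cast : ℤ → ZMod 16) h
  push_cast [D'] at h16
  rw [(by decide : ∀ a b : ZMod 16,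
    343 * (2 * a + 1) ^ 4 + 294 * (2 * b + 1) ^ 2 * (2 * a + 1) ^ 2 - (2 * b + 1) ^ 4 = 12)] at h16
  exact (by decide : ∀ x : ZMod 16, 4 * x ^ 2 ≠ 12) _ h16

theorem sq_ne_D'_of_odd_add {w e f : ℤ} (hef : Odd (f + e)) : w ^ 2 ≠ D' f e := by
  obtain ⟨c, hc⟩ := hef
  obtain rfl : f = 2 * c + 1 - e := by linarith
  intro h
  have h8 := congrArg (Int.cast : ℤ → ZMod 8) h
  push_cast [D'] at h8
  rw [(by decide : ∀ c e : ZMod 8,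
    343 * e ^ 4 + 294 * (2 * c + 1 - e) ^ 2 * e ^ 2 - (2 * c + 1 - e) ^ 4 = 7)] at h8
  exact (by decide : ∀ x : ZMod 8, x ^ 2 ≠ 7) _ h8

theorem sq_ne_G_of_odd {Z w m : ℤ} (hwm : IsCoprime w m) (hm : Odd m) : Z ^ 2 ≠ G w m := by
  intro h
  have hX : (2 * |Z|) ^ 2 = (2 * w ^ 2 - 147 * m ^ 2) ^ 2 + 7 ^ 3 * m ^ 4 := by
    rw [mul_pow, sq_abs, h]; unfold G; ring
  have hY7 : IsCoprime (2 * w ^ 2 - 147 * m ^ 2) 7 := by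
    refine (prime_seven.coprime_iff_not_dvd.2 fun h7 => ?_).symm
    have h7w : (7 : ℤ) ∣ w := prime_seven.dvd_of_dvd_pow (n := 2) (by omega)
    exact prime_seven.not_isUnit (hwm.isUnit_of_dvd' h7w (seven_dvd_of_sq_eq_G h h7w))
  have hYm : IsCoprime (2 * w ^ 2 - 147 * m ^ 2) m := by
    rw [show 2 * w ^ 2 - 147 * m ^ 2 = 2 * w ^ 2 + m * (-147 * m) by ring]
    exact ((Int.isCoprime_two_left.2 hm).mul_left hwm.pow_left).add_mul_left_left _
  have hodd : Odd (2 * |Z| + (2 * w ^ 2 - 147 * m ^ 2)) :=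
    (even_two_mul _).add_odd ((even_two_mul _).sub_odd ((by decide : Odd (147 : ℤ)).mul hm.pow))
  obtain ⟨e, f, hef, hY⟩ := Int.exists_of_sq_eq_sq_add_pow_three_mul prime_seven (by norm_num)
    (by rintro rfl; exact Int.not_odd_zero hm)
    (isCoprime_of_sq_eq_sq_add_right hX (hY7.pow_right.mul_right hYm.pow_right)) hodd
    (by positivity) hX
  have hm2 : m ^ 2 = e ^ 2 * f ^ 2 := by rw [← mul_pow, ← Int.natAbs_eq_iff_sq_eq, hef]
  obtain ⟨he, hf⟩ := Int.odd_mul.1 (Int.natAbs_odd.1 (hef ▸ Int.natAbs_odd.2 hm))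
  rcases hY with hY | hY
  · exact four_mul_sq_ne_D (w := w) he hf (by unfold D; linear_combination hY + 294 * hm2)
  · exact four_mul_sq_ne_D' (w := w) he hf (by unfold D'; linear_combination hY + 294 * hm2)

theorem exists_sq_eq_D_of_sq_eq_G {Z w m : ℤ} (hwm : IsCoprime w (2 * m)) (hm : m ≠ 0)
    (h : Z ^ 2 = G w (2 * m)) :
    ∃ e f, IsCoprime f e ∧ Odd (f + e) ∧ e ≠ 0 ∧ e.natAbs ≤ m.natAbs ∧ w ^ 2 = D f e := by
  have hw : Odd w := Int.isCoprime_two_right.1 hwm.of_mul_right_left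
  have hYodd : Odd (w ^ 2 - 294 * m ^ 2) := hw.pow.sub_even ⟨147 * m ^ 2, by ring⟩
  have hX : |Z| ^ 2 = (w ^ 2 - 294 * m ^ 2) ^ 2 + 4 * 7 ^ 3 * m ^ 4 := by
    rw [sq_abs, h]; unfold G; ring
  have hZ : Odd |Z| := by
    refine (Int.odd_pow' two_ne_zero).1 ?_
    rw [hX]
    exact hYodd.pow.add_even ⟨2 * 7 ^ 3 * m ^ 4, by ring⟩
  have hY7 : IsCoprime (w ^ 2 - 294 * m ^ 2) 7 := by
    refine (prime_seven.coprime_iff_not_dvd.2 fun h7 => ?_).symm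
    have h7w : (7 : ℤ) ∣ w := prime_seven.dvd_of_dvd_pow (n := 2) (by omega)
    exact prime_seven.not_isUnit (hwm.isUnit_of_dvd' h7w (seven_dvd_of_sq_eq_G h h7w))
  have hYm : IsCoprime (w ^ 2 - 294 * m ^ 2) m := by
    rw [show w ^ 2 - 294 * m ^ 2 = w ^ 2 + m * (-294 * m) by ring]
    exact hwm.of_mul_right_right.pow_left.add_mul_left_left _
  have hY4 : IsCoprime (w ^ 2 - 294 * m ^ 2) 4 := by
    simpa using (Int.isCoprime_two_right.2 hYodd).pow_right (n := 2)
  obtain ⟨e, f, hef, habs, hXe, hY⟩ := Int.exists_of_sq_eq_sq_add_four_mul_pow_three_mul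
    prime_seven (by norm_num) hm
    (isCoprime_of_sq_eq_sq_add_right hX ((hY4.mul_right hY7.pow_right).mul_right hYm.pow_right))
    hZ (abs_nonneg Z) hX
  have hm2 : m ^ 2 = e ^ 2 * f ^ 2 := by rw [← mul_pow, ← Int.natAbs_eq_iff_sq_eq, habs]
  have hef0 : e * f ≠ 0 := Int.natAbs_ne_zero.1 (habs ▸ Int.natAbs_ne_zero.2 hm)
  have hodd : Odd (f + e) := by
    rw [hXe] at hZ
    simp only [Int.odd_add, Int.odd_mul, Int.odd_pow' four_ne_zero, Int.even_pow' four_ne_zero,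
      ← Int.not_odd_iff_even] at hZ ⊢
    tauto
  rcases hY with hY | hY
  · refine ⟨e, f, hef.symm, hodd, left_ne_zero_of_mul hef0, ?_, ?_⟩
    · exact habs ▸ Int.natAbs_le_of_dvd_ne_zero (dvd_mul_right e f) hef0
    · unfold D; linear_combination hY + 294 * hm2
  · exact absurd (by unfold D'; linear_combination hY + 294 * hm2)
      (sq_ne_D'_of_odd_add (w := w) hodd)

theorem exists_sq_eq_H_of_sq_eq_D {y t s : ℤ} (hts : IsCoprime t s) (hodd : Odd (t + s))
    (hs : s ≠ 0) (h : y ^ 2 = D t s) :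
    ∃ e f, IsCoprime f e ∧ e ≠ 0 ∧ e.natAbs ≤ 2 * s.natAbs ∧ (2 * t) ^ 2 = H f e := by
  have hX : (t ^ 2 + 147 * s ^ 2) ^ 2 = y ^ 2 + 4 * 7 ^ 3 * (2 * s) ^ 4 := by
    rw [h]; unfold D; ring
  have hXodd : Odd (t ^ 2 + 147 * s ^ 2) := by
    simpa [parity_simps, Int.even_pow, show ¬ Even (147 : ℤ) by decide] using hodd
  have hX7 : IsCoprime (t ^ 2 + 147 * s ^ 2) 7 := by
    refine (prime_seven.coprime_iff_not_dvd.2 fun h7 => ?_).symm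
    have h7t : (7 : ℤ) ∣ t := prime_seven.dvd_of_dvd_pow (n := 2) (by omega)
    exact prime_seven.not_isUnit (hts.isUnit_of_dvd' h7t (seven_dvd_of_sq_eq_D h h7t))
  have hXs : IsCoprime (t ^ 2 + 147 * s ^ 2) (2 * s) := by
    refine (Int.isCoprime_two_right.2 hXodd).mul_right ?_
    rw [show t ^ 2 + 147 * s ^ 2 = t ^ 2 + s * (147 * s) by ring]
    exact hts.pow_left.add_mul_left_left _
  have hX4 : IsCoprime (t ^ 2 + 147 * s ^ 2) 4 := by
    simpa using (Int.isCoprime_two_right.2 hXodd).pow_right (n := 2)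
  obtain ⟨e, f, hef, habs, hXe, -⟩ := Int.exists_of_sq_eq_sq_add_four_mul_pow_three_mul
    prime_seven (by norm_num) (mul_ne_zero two_ne_zero hs)
    (isCoprime_of_sq_eq_sq_add_left hX ((hX4.mul_right hX7.pow_right).mul_right hXs.pow_right))
    hXodd (by positivity) hX
  have hs2 : (2 * s) ^ 2 = e ^ 2 * f ^ 2 := by rw [← mul_pow, ← Int.natAbs_eq_iff_sq_eq, habs]
  have hef0 : e * f ≠ 0 := Int.natAbs_ne_zero.1 (habs ▸ Int.natAbs_ne_zero.2 (by positivity))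
  refine ⟨e, f, hef.symm, left_ne_zero_of_mul hef0, ?_, ?_⟩
  · simpa [habs, Int.natAbs_mul] using
      Int.natAbs_le_of_dvd_ne_zero (dvd_mul_right e f) hef0
  · unfold H; linear_combination 4 * hXe - 147 * hs2

theorem exists_sq_eq_H_natAbs_lt {Z v m : ℤ} (hvm : IsCoprime v m) (hm : m ≠ 0)
    (h : Z ^ 2 = H v m) :
    ∃ Z' v' m', IsCoprime v' m' ∧ m' ≠ 0 ∧ m'.natAbs < m.natAbs ∧ Z' ^ 2 = H v' m' := by
  obtain ⟨m, rfl | rfl⟩ := Int.even_or_odd' m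
  · obtain ⟨Z, hZ⟩ := Int.exists_sq_eq_of_sq_eq_four_mul (h.trans (H_two_mul_right v m))
    obtain ⟨m, rfl | rfl⟩ := Int.even_or_odd' m
    · obtain ⟨e, f, hfe, hodd, he, hem, hD⟩ :=
        exists_sq_eq_D_of_sq_eq_G hvm.of_mul_right_right (by omega) hZ
      obtain ⟨e', f', hfe', he', hee', hH⟩ := exists_sq_eq_H_of_sq_eq_D hfe hodd he hD
      exact ⟨2 * f, f', e', hfe', he', by omega, hH⟩
    · exact absurd hZ (sq_ne_G_of_odd hvm.of_mul_right_right (odd_two_mul_add_one m))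
  · exact absurd (by rw [G_two_mul_left, ← h]; ring) (sq_ne_G_of_odd (Z := 2 * Z)
      ((Int.isCoprime_two_left.2 (odd_two_mul_add_one m)).mul_left hvm) (odd_two_mul_add_one m))

theorem eq_zero_of_sq_eq_H {Z v m : ℤ} (hvm : IsCoprime v m) (h : Z ^ 2 = H v m) : m = 0 := by
  induction hn : m.natAbs using Nat.strong_induction_on generalizing Z v m with
  | _ n ih =>
    by_contra hm
    obtain ⟨Z', v', m', hvm', hm', hlt, h'⟩ := exists_sq_eq_H_natAbs_lt hvm hm h
    exact hm' (ih _ (hn ▸ hlt) hvm' h' rfl)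

theorem eq_of_isSquare_seven_mul_F {a b : ℤ} (hab : IsCoprime a b) (hb : 0 < b)
    (h : IsSquare (7 * F a b)) : a = -1 ∧ b = 3 := by
  obtain ⟨r, hr⟩ := h
  obtain ⟨s, rfl⟩ : 7 ∣ r := (prime_seven.dvd_or_dvd ⟨F a b, hr.symm⟩).elim id id
  have hF : F a b = 7 * s ^ 2 :=
    mul_left_cancel₀ (by norm_num : (7 : ℤ) ≠ 0) (by linear_combination hr)
  obtain ⟨v, hv⟩ := seven_dvd_of_seven_dvd_F ⟨_, hF⟩
  obtain rfl : b = 7 * v - 3 * a := by linarith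
  have hH : s ^ 2 = H (7 * v - a) v :=
    mul_left_cancel₀ (by norm_num : (7 : ℤ) ≠ 0) (by rw [← hF, F_seven_mul_sub])
  have hcop : IsCoprime (7 * v - a) v := by
    obtain ⟨c, d, hcd⟩ := hab
    exact ⟨3 * d - c, 7 * c - 14 * d, by linear_combination hcd⟩
  obtain rfl := eq_zero_of_sq_eq_H hcop hH
  have ha := Int.isUnit_iff.1 (hab.isUnit_of_dvd' dvd_rfl ⟨-3, by ring⟩)
  omega

theorem isSquare_seven_mul_F {x y : ℚ}
    (h : y ^ 2 = 7 * (16 * x ^ 4 + 68 * x ^ 3 + 111 * x ^ 2 + 62 * x + 11)) :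
    IsSquare (7 * F x.num x.den) := by
  rw [← Rat.isSquare_intCast_iff]
  refine ⟨y * x.den ^ 2, ?_⟩
  push_cast [F]
  rw [← Rat.mul_den_eq_num]
  linear_combination -(x.den : ℚ) ^ 4 * h

end Xe7

/-- The only rational points of (the smooth projective model of) the genus-1 curve
`y² = 7(16x⁴ + 68x³ + 111x² + 62x + 11)` are `(−1/3, 14/9)` and `(−1/3, −14/9)`.  (The two
points at infinity of the smooth projective model are defined over `ℚ(√7)` and are not rational,
so the rational points are exactly the affine solutions.) -/
theorem Xe7_rational_points :
    {P : ℚ × ℚ | P.2 ^ 2 =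
        7 * (16 * P.1 ^ 4 + 68 * P.1 ^ 3 + 111 * P.1 ^ 2 + 62 * P.1 + 11)} =
      {(-1/3, 14/9), (-1/3, -14/9)} := by
  ext ⟨x, y⟩
  simp only [Set.mem_ofPred_eq, Set.mem_insert_iff, Set.mem_singleton_iff, Prod.mk.injEq]
  constructor
  · intro h
    have hx : IsCoprime x.num x.den := Int.isCoprime_iff_gcd_eq_one.2 x.reduced
    obtain ⟨hnum, hden⟩ :=
      Xe7.eq_of_isSquare_seven_mul_F hx (mod_cast x.pos) (Xe7.isSquare_seven_mul_F h)
    obtain rfl : x = -1 / 3 := by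
      rw [← Rat.num_div_den x, hnum, show x.den = 3 by exact_mod_cast hden]; norm_num
    have hy : y ^ 2 = (14 / 9) ^ 2 := by rw [h]; norm_num
    rcases sq_eq_sq_iff_eq_or_eq_neg.1 hy with rfl | rfl <;> norm_num
  · rintro (⟨rfl, rfl⟩ | ⟨rfl, rfl⟩) <;> norm_num
end
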